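/- arXiv:1910.10546 — 5 statements merged into one kernel-verified Lean document; each statement's English description precedes it below -/
import Mathlib

section
/- For every alternating Büchi automaton A with n states there exists a nondeterministic Büchi automaton B with at most 2^(O(n)) states (e.g. 3^n states via the Miyano–Hayashi construction) such that B accepts exactly the same ω-language as A. -/
/-- Positive Boolean formulas over a set of states. -/
inductive PosBool (Q : Type) where
  | tt : PosBool Q
  | ff : PosBool Q
  | var (q : Q) : PosBool Q
  | and (a b : PosBool Q) : PosBool Q
  | or (a b : PosBool Q) : PosBool Q

/-- Satisfaction of a positive Boolean formula by a valuation (set of states made true). -/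
def PosBool.Sat {Q : Type} (v : Set Q) : PosBool Q → Prop
  | .tt => True
  | .ff => False
  | .var q => q ∈ v
  | .and a b => a.Sat v ∧ b.Sat v
  | .or a b => a.Sat v ∨ b.Sat v

/-- An alternating Büchi automaton. -/
structure ABA (A : Type) where
  Q : Type
  fin : Fintype Q
  q0 : Q
  δ : Q → A → PosBool Q
  F : Set Q

/-- A run tree of an ABA on an infinite word: a prefix-closed set of tree nodes
labelled by states, with root labelled by the initial state, such that at every node the
valuation making exactly the labels of its children true satisfies the transition formula. -/
structure ABA.Run {A : Type} (M : ABA A) (w : ℕ → A) where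
  T : Set (List ℕ)
  r : List ℕ → M.Q
  root_mem : [] ∈ T
  root_label : r [] = M.q0
  prefix_closed : ∀ t n, t ++ [n] ∈ T → t ∈ T
  trans : ∀ t ∈ T, (M.δ (r t) (w t.length)).Sat {q | ∃ n, t ++ [n] ∈ T ∧ r (t ++ [n]) = q}

/-- A run is accepting iff every infinite branch visits accepting states infinitely often. -/
def ABA.Run.Accepting {A : Type} {M : ABA A} {w : ℕ → A} (ρ : M.Run w) : Prop :=
  ∀ f : ℕ → List ℕ, f 0 = [] → (∀ k, f k ∈ ρ.T ∧ ∃ n, f (k + 1) = f k ++ [n]) →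
    ∀ N, ∃ k ≥ N, ρ.r (f k) ∈ M.F

/-- The ω-language of an ABA. -/
def ABA.Lang {A : Type} (M : ABA A) : Set (ℕ → A) := {w | ∃ ρ : M.Run w, ρ.Accepting}

/-- Transition formulas that are pure disjunctions (of states, possibly empty/false). -/
def PosBool.IsDisj {Q : Type} : PosBool Q → Prop
  | .var _ => True
  | .ff => True
  | .or a b => a.IsDisj ∧ b.IsDisj
  | _ => False

/-- A nondeterministic Büchi automaton is an ABA whose transitions are pure disjunctions. -/
def ABA.IsNondet {A : Type} (M : ABA A) : Prop := ∀ q a, (M.δ q a).IsDisj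

/-!
Miyano–Hayashi construction. A state of the nondeterministic automaton is a pair `O ⊆ S ⊆ Q`,
encoded as a map `Q → Fin 3` (hence `3 ^ n` states): `S` is the set of states occupied by the
current level of a run of `M`, and `O` the set of those that still owe a visit to `F` since the
last breakpoint, a level where `O = ∅`. The automaton accepts when breakpoints recur.

An accepting run of the new automaton unfolds into a run tree of `M` whose branches follow the
guessed successor sets; a branch avoiding `F` from some point on is trapped in `O` after the next
breakpoint, so there could be no further breakpoint. Conversely, given an accepting run tree of `M`,
made finitely branching, take for `S` the labels of a level and for `O` the labels of the nodes
whose path has avoided `F` since the last breakpoint; if breakpoints stopped, Kőnig's lemma would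
give a branch of the tree that eventually avoids `F`.
-/

namespace PosBool

variable {Q : Type}

theorem Sat.mono {v v' : Set Q} (h : v ⊆ v') : ∀ {φ : PosBool Q}, φ.Sat v → φ.Sat v'
  | .tt, _ => trivial
  | .var _, hq => h hq
  | .and _ _, ⟨ha, hb⟩ => ⟨ha.mono h, hb.mono h⟩
  | .or _ _, .inl ha => .inl (ha.mono h)
  | .or _ _, .inr hb => .inr (hb.mono h)

def anyOf : List Q → PosBool Q
  | [] => .ff
  | q :: l => .or (.var q) (anyOf l)

theorem isDisj_anyOf : ∀ l : List Q, (anyOf l).IsDisj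
  | [] => trivial
  | _ :: l => ⟨trivial, isDisj_anyOf l⟩

theorem sat_anyOf {v : Set Q} : ∀ {l : List Q}, (anyOf l).Sat v ↔ ∃ q ∈ l, q ∈ v
  | [] => by simp [anyOf, Sat]
  | q :: l => by simp [anyOf, Sat, sat_anyOf (l := l)]

end PosBool

theorem List.length_eq_of_forall_succ_eq_append {α : Type*} {f : ℕ → List α} (h0 : f 0 = [])
    (hsucc : ∀ k, ∃ a, f (k + 1) = f k ++ [a]) (k : ℕ) : (f k).length = k := by
  induction k with
  | zero => simp [h0]
  | succ k ih =>
    obtain ⟨a, ha⟩ := hsucc k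
    simp [ha, ih]

/-- Kőnig's lemma for a tree given by its finite, nonempty levels. -/
theorem List.exists_seq_append_singleton_mem {α : Type*} {V : ℕ → Set (List α)}
    (hlen : ∀ k, ∀ t ∈ V k, t.length = k) (hfin : ∀ k, (V k).Finite) (hne : ∀ k, (V k).Nonempty)
    (htake : ∀ k, ∀ t ∈ V (k + 1), t.take k ∈ V k) :
    ∃ g : ℕ → List α, ∀ k, g k ∈ V k ∧ ∃ a, g (k + 1) = g k ++ [a] := by
  have take_mem {i j : ℕ} (hij : i ≤ j) : ∀ t ∈ V j, t.take i ∈ V i := by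
    induction j, hij using Nat.le_induction with
    | base => exact fun t ht => by rwa [List.take_of_length_le (hlen i t ht).le]
    | succ j hij ih =>
      intro t ht
      simpa [List.take_take, min_eq_left hij] using ih _ (htake j t ht)
  have _ : ∀ k, Nonempty (V k) := fun k => (hne k).to_subtype
  have _ : Finite (V 0) := (hfin 0).to_subtype
  obtain ⟨f, hf⟩ := exists_seq_forall_proj_of_forall_finite (α := fun k => V k)
    (fun {i _} hij t => ⟨t.1.take i, take_mem hij t.1 t.2⟩)
    (fun i t => Subtype.ext (List.take_of_length_le (hlen i t.1 t.2).le))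
    (fun _ _ _ hij _ _ => Subtype.ext (by simp [List.take_take, min_eq_left hij]))
    (fun i _ => by have := (hfin (i + 1)).to_subtype; exact Set.toFinite _)
  refine ⟨fun k => f k, fun k => ⟨(f k).2, ?_⟩⟩
  have hlt : k < (f (k + 1)).1.length := by rw [hlen _ _ (f (k + 1)).2]; omega
  refine ⟨(f (k + 1)).1[k], ?_⟩
  change (f (k + 1)).1 = (f k).1 ++ _
  rw [← congrArg Subtype.val (hf (Nat.le_succ k)), List.take_concat_get', List.take_of_length_le]
  rw [hlen _ _ (f (k + 1)).2]

namespace ABA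

variable {A : Type}

attribute [local instance] ABA.fin

section Runs

variable {M : ABA A} {w : ℕ → A} (ρ : M.Run w)

theorem Run.mem_of_prefix {s t : List ℕ} (hst : s <+: t) (ht : t ∈ ρ.T) : s ∈ ρ.T := by
  obtain ⟨d, rfl⟩ := hst
  induction d using List.reverseRecOn with
  | nil => simpa using ht
  | append_singleton d n ih => exact ih (ρ.prefix_closed _ n (by simpa using ht))

def Run.level (k : ℕ) : Set (List ℕ) := {t ∈ ρ.T | t.length = k}

theorem Run.level_zero : ρ.level 0 = {[]} := by
  ext t
  simp only [Run.level, Set.mem_ofPred_eq, List.length_eq_zero_iff, Set.mem_singleton_iff]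
  exact ⟨And.right, fun h => ⟨h ▸ ρ.root_mem, h⟩⟩

def Run.childLabels (t : List ℕ) : Set M.Q := {q | ∃ n, t ++ [n] ∈ ρ.T ∧ ρ.r (t ++ [n]) = q}

theorem Run.childLabels_subset_image_level {t : List ℕ} {k : ℕ} (ht : t ∈ ρ.level k) :
    ρ.childLabels t ⊆ ρ.r '' ρ.level (k + 1) := by
  rintro _ ⟨n, hn, rfl⟩
  exact ⟨t ++ [n], ⟨hn, by simp [ht.2]⟩, rfl⟩

def Run.FinitelyBranching : Prop := ∀ t, {n | t ++ [n] ∈ ρ.T}.Finite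

theorem Run.FinitelyBranching.finite_level {ρ : M.Run w} (hρ : ρ.FinitelyBranching) (k : ℕ) :
    (ρ.level k).Finite := by
  induction k with
  | zero => exact (Set.finite_singleton []).subset fun t ht => List.length_eq_zero_iff.1 ht.2
  | succ k ih =>
    refine (ih.biUnion fun t _ => (hρ t).image fun n => t ++ [n]).subset ?_
    rintro t ⟨ht, hlen⟩
    obtain ⟨u, n, rfl⟩ : ∃ u n, t = u ++ [n] := by
      rcases t.eq_nil_or_concat with rfl | ⟨u, n, rfl⟩
      · simp at hlen
      · exact ⟨u, n, by simp⟩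
    simp only [Set.mem_iUnion, Set.mem_image]
    exact ⟨u, ⟨ρ.prefix_closed u n ht, by simpa using hlen⟩, n, ht, rfl⟩

def Run.IsLeastChild (t : List ℕ) (n : ℕ) : Prop :=
  ∀ m < n, t ++ [m] ∈ ρ.T → ρ.r (t ++ [m]) ≠ ρ.r (t ++ [n])

def Run.prunedNodes : Set (List ℕ) := {t ∈ ρ.T | ∀ u n, u ++ [n] <+: t → ρ.IsLeastChild u n}

theorem Run.concat_mem_prunedNodes_iff {t : List ℕ} {n : ℕ} :
    t ++ [n] ∈ ρ.prunedNodes ↔ t ∈ ρ.prunedNodes ∧ t ++ [n] ∈ ρ.T ∧ ρ.IsLeastChild t n := by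
  simp only [prunedNodes, Set.mem_ofPred_eq, List.prefix_concat_iff]
  constructor
  · rintro ⟨ht, hleast⟩
    exact ⟨⟨ρ.prefix_closed t n ht, fun u m h => hleast u m (.inr h)⟩, ht, hleast t n (.inl rfl)⟩
  · rintro ⟨⟨-, hleast⟩, ht, htn⟩
    refine ⟨ht, fun u m => ?_⟩
    rintro (h | h)
    · obtain ⟨rfl, rfl⟩ : u = t ∧ m = n := by simpa using h
      exact htn
    · exact hleast u m h

theorem Run.childLabels_subset_prunedNodes {t : List ℕ} (ht : t ∈ ρ.prunedNodes) :
    ρ.childLabels t ⊆ {q | ∃ n, t ++ [n] ∈ ρ.prunedNodes ∧ ρ.r (t ++ [n]) = q} := by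
  rintro q hq
  classical
  refine ⟨Nat.find hq, ρ.concat_mem_prunedNodes_iff.2 ⟨ht, (Nat.find_spec hq).1, ?_⟩,
    (Nat.find_spec hq).2⟩
  intro m hm hmT hlabel
  exact Nat.find_min hq hm ⟨hmT, hlabel.trans (Nat.find_spec hq).2⟩

/-- Keeps only the first child with each label: the children labels, hence the transition
condition, are unchanged, and there is at most one child per state. -/
def Run.prune : M.Run w where
  T := ρ.prunedNodes
  r := ρ.r
  root_mem := ⟨ρ.root_mem, fun u n h => by simp at h⟩
  root_label := ρ.root_label
  prefix_closed _ _ h := (ρ.concat_mem_prunedNodes_iff.1 h).1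
  trans t ht := (ρ.trans t ht.1).mono (ρ.childLabels_subset_prunedNodes ht)

theorem Run.prune_finitelyBranching : ρ.prune.FinitelyBranching := by
  intro t
  refine Set.Finite.of_finite_image (f := fun n => ρ.r (t ++ [n])) (Set.toFinite _) ?_
  intro m hm n hn hmn
  have hleast {m n : ℕ} (hn : t ++ [n] ∈ ρ.prunedNodes) (hm : t ++ [m] ∈ ρ.prunedNodes)
      (hmn : ρ.r (t ++ [m]) = ρ.r (t ++ [n])) : ¬ m < n := fun hlt =>
    (ρ.concat_mem_prunedNodes_iff.1 hn).2.2 m hlt hm.1 hmn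
  exact le_antisymm (not_lt.1 (hleast hm hn hmn.symm)) (not_lt.1 (hleast hn hm hmn))

theorem Run.Accepting.prune {ρ : M.Run w} (hρ : ρ.Accepting) : ρ.prune.Accepting :=
  fun f h0 hf => hρ f h0 fun k => ⟨(hf k).1.1, (hf k).2⟩

end Runs

section OfStep

variable {Q : Type} [Fintype Q]

open Classical in
noncomputable def ofStep (q₀ : Q) (step : A → Q → Q → Prop) (F : Set Q) : ABA A where
  Q := Q
  fin := inferInstance
  q0 := q₀
  δ q a := PosBool.anyOf (Finset.univ.filter (step a q)).toList
  F := F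

variable {q₀ : Q} {step : A → Q → Q → Prop} {F : Set Q}

theorem ofStep_isNondet : (ofStep q₀ step F).IsNondet := fun _ _ => PosBool.isDisj_anyOf _

theorem sat_ofStep_δ {q : Q} {a : A} {v : Set Q} :
    ((ofStep q₀ step F).δ q a).Sat v ↔ ∃ q' ∈ v, step a q q' := by
  simp [ofStep, PosBool.sat_anyOf, and_comm]

theorem mem_lang_ofStep_iff {w : ℕ → A} :
    w ∈ (ofStep q₀ step F).Lang ↔ ∃ s : ℕ → Q, s 0 = q₀ ∧ (∀ k, step (w k) (s k) (s (k + 1))) ∧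
      ∀ N, ∃ k ≥ N, s k ∈ F := by
  constructor
  · rintro ⟨ρ, hacc⟩
    have hchild (t : List ℕ) : ∃ n, t ∈ ρ.T →
        t ++ [n] ∈ ρ.T ∧ step (w t.length) (ρ.r t) (ρ.r (t ++ [n])) := by
      by_cases ht : t ∈ ρ.T
      · obtain ⟨_, ⟨n, hn, rfl⟩, hstep⟩ := sat_ofStep_δ.1 (ρ.trans t ht)
        exact ⟨n, fun _ => ⟨hn, hstep⟩⟩
      · exact ⟨0, fun h => absurd h ht⟩
    choose next hnext using hchild
    let branch : ℕ → List ℕ := fun k => Nat.rec [] (fun _ t => t ++ [next t]) k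
    have hbranch (k : ℕ) : branch k ∈ ρ.T ∧ (branch k).length = k := by
      induction k with
      | zero => exact ⟨ρ.root_mem, rfl⟩
      | succ k ih =>
        refine ⟨(hnext _ ih.1).1, ?_⟩
        change (branch k ++ [next (branch k)]).length = k + 1
        simp [ih.2]
    refine ⟨fun k => ρ.r (branch k), ρ.root_label, fun k => ?_,
      hacc branch rfl fun k => ⟨(hbranch k).1, _, rfl⟩⟩
    simpa [(hbranch k).2] using (hnext _ (hbranch k).1).2
  · rintro ⟨s, hs0, hstep, hinf⟩
    refine ⟨⟨Set.univ, fun t => s t.length, trivial, hs0, fun _ _ _ => trivial, fun t _ =>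
      sat_ofStep_δ.2 ⟨_, ⟨0, trivial, rfl⟩, by simpa using hstep t.length⟩⟩, fun f h0 hf N => ?_⟩
    obtain ⟨k, hk, hF⟩ := hinf N
    refine ⟨k, hk, ?_⟩
    change s (f k).length ∈ F
    rwa [List.length_eq_of_forall_succ_eq_append h0 fun k => (hf k).2]

end OfStep

/-- `S k` is the `k`-th level of a run DAG and `Y k q` the set of successors of `q` in it;
unfolding the DAG gives a run tree. -/
theorem mem_lang_of_layers (M : ABA A) {w : ℕ → A} (S : ℕ → Set M.Q) (Y : ℕ → M.Q → Set M.Q)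
    (h0 : M.q0 ∈ S 0) (hY : ∀ k, ∀ q ∈ S k, Y k q ⊆ S (k + 1) ∧ (M.δ q (w k)).Sat (Y k q))
    (hacc : ∀ p : ℕ → M.Q, p 0 = M.q0 → (∀ k, p k ∈ S k ∧ p (k + 1) ∈ Y k (p k)) →
      ∀ N, ∃ k ≥ N, p k ∈ M.F) :
    w ∈ M.Lang := by
  have : Nonempty M.Q := ⟨M.q0⟩
  -- A node lists codes of states under `code`; it is labelled by the state its last entry codes.
  obtain ⟨code, hcode⟩ := exists_surjective_nat M.Q
  let r : List ℕ → M.Q := fun t => t.getLast?.elim M.q0 code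
  let T : Set (List ℕ) := {t | ∀ u n, u ++ [n] <+: t → code n ∈ Y u.length (r u)}
  have r_concat (t : List ℕ) (n : ℕ) : r (t ++ [n]) = code n := by simp [r]
  have concat_mem_iff {t : List ℕ} {n : ℕ} :
      t ++ [n] ∈ T ↔ t ∈ T ∧ code n ∈ Y t.length (r t) := by
    simp only [T, Set.mem_ofPred_eq, List.prefix_concat_iff]
    constructor
    · exact fun h => ⟨fun u m hp => h u m (.inr hp), h t n (.inl rfl)⟩
    · rintro ⟨ht, hn⟩ u m (h | h)
      · obtain ⟨rfl, rfl⟩ : u = t ∧ m = n := by simpa using h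
        exact hn
      · exact ht u m h
  have mem_S (t : List ℕ) (ht : t ∈ T) : r t ∈ S t.length := by
    induction t using List.reverseRecOn with
    | nil => exact h0
    | append_singleton t n ih =>
      obtain ⟨ht, hn⟩ := concat_mem_iff.1 ht
      simpa [r_concat] using (hY _ _ (ih ht)).1 hn
  have childLabels_eq {t : List ℕ} (ht : t ∈ T) :
      {q | ∃ n, t ++ [n] ∈ T ∧ r (t ++ [n]) = q} = Y t.length (r t) := by
    ext q
    constructor
    · rintro ⟨n, hn, rfl⟩
      simpa [r_concat] using (concat_mem_iff.1 hn).2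
    · intro hq
      obtain ⟨n, rfl⟩ := hcode q
      exact ⟨n, concat_mem_iff.2 ⟨ht, hq⟩, r_concat t n⟩
  refine ⟨⟨T, r, fun u n h => by simp at h, rfl, fun _ _ h => (concat_mem_iff.1 h).1,
    fun t ht => ?_⟩, fun f h0 hf => hacc (fun k => r (f k)) (by simp [h0, r]) fun k => ?_⟩
  · rw [childLabels_eq ht]
    exact (hY _ _ (mem_S t ht)).2
  · have hlen := List.length_eq_of_forall_succ_eq_append h0 fun k => (hf k).2
    obtain ⟨n, hn⟩ := (hf k).2
    have hmem := (hf (k + 1)).1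
    rw [hn, concat_mem_iff, hlen] at hmem
    refine ⟨by simpa [hlen] using mem_S _ (hf k).1, ?_⟩
    simpa [hn, r_concat] using hmem.2

end ABA

namespace MiyanoHayashi

open ABA

attribute [local instance] ABA.fin

section States

variable {Q : Type}

def present (f : Q → Fin 3) : Set Q := {q | f q ≠ 0}

def owing (f : Q → Fin 3) : Set Q := {q | f q = 2}

open Classical in
noncomputable def encode (S O : Set Q) : Q → Fin 3 :=
  fun q => if q ∈ O then 2 else if q ∈ S then 1 else 0

theorem owing_encode (S O : Set Q) : owing (encode S O) = O := by
  ext q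
  by_cases hO : q ∈ O <;> by_cases hS : q ∈ S <;> simp [owing, encode, hO, hS]

theorem present_encode {S O : Set Q} (h : O ⊆ S) : present (encode S O) = S := by
  ext q
  by_cases hO : q ∈ O <;> by_cases hS : q ∈ S <;> simp [present, encode, hO, hS]
  exact hS (h hO)

end States

variable {A : Type} (M : ABA A)

def Step (a : A) (f g : M.Q → Fin 3) : Prop :=
  (∀ q ∈ present f, ∃ Y ⊆ present g, (M.δ q a).Sat Y ∧ (q ∈ owing f → Y \ M.F ⊆ owing g)) ∧
    (owing f = ∅ → owing g = present g \ M.F)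

open Classical in
noncomputable def automaton : ABA A :=
  ofStep (encode {M.q0} ({M.q0} \ M.F)) (Step M) {f | owing f = ∅}

theorem isNondet_automaton : (automaton M).IsNondet := by
  classical
  exact ofStep_isNondet

theorem card_automaton :
    @Fintype.card (automaton M).Q (automaton M).fin = 3 ^ @Fintype.card M.Q M.fin := by
  classical
  change Fintype.card (M.Q → Fin 3) = _
  simp

theorem lang_automaton_subset : (automaton M).Lang ⊆ M.Lang := by
  classical
  intro w hw
  obtain ⟨s, hs0, hstep, hbreak⟩ := mem_lang_ofStep_iff.1 hw
  have hY (k : ℕ) (q : M.Q) : ∃ Y, q ∈ present (s k) → Y ⊆ present (s (k + 1)) ∧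
      (M.δ q (w k)).Sat Y ∧ (q ∈ owing (s k) → Y \ M.F ⊆ owing (s (k + 1))) := by
    by_cases hq : q ∈ present (s k)
    · obtain ⟨Y, hYS, hYsat⟩ := (hstep k).1 q hq
      exact ⟨Y, fun _ => ⟨hYS, hYsat⟩⟩
    · exact ⟨∅, fun h => absurd h hq⟩
  choose Y hY using hY
  refine mem_lang_of_layers M (fun k => present (s k)) Y ?_
    (fun k q hq => ⟨(hY k q hq).1, (hY k q hq).2.1⟩) fun p _ hp N => ?_
  · rw [hs0, present_encode Set.sdiff_subset]
    rfl
  by_contra! hF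
  obtain ⟨b, hbN, hb⟩ := hbreak N
  have trapped (k : ℕ) (hk : b + 1 ≤ k) : p k ∈ owing (s k) := by
    induction k, hk using Nat.le_induction with
    | base => rw [(hstep b).2 hb]; exact ⟨(hp _).1, hF _ (by omega)⟩
    | succ k hk ih => exact (hY k (p k) (hp k).1).2.2 ih ⟨(hp k).2, hF _ (by omega)⟩
  obtain ⟨b', hb', hb'empty⟩ := hbreak (b + 1)
  exact Set.notMem_empty _ ((show owing (s b') = ∅ from hb'empty) ▸ trapped b' hb')

section Completeness

variable {M} {w : ℕ → A} (ρ : M.Run w)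

def owingNodes : ℕ → Set (List ℕ)
  | 0 => {t ∈ ρ.level 0 | ρ.r t ∉ M.F}
  | k + 1 => {t ∈ ρ.level (k + 1) | ρ.r t ∉ M.F ∧ (owingNodes k = ∅ ∨ t.take k ∈ owingNodes k)}

theorem owingNodes_subset (k : ℕ) : owingNodes ρ k ⊆ {t ∈ ρ.level k | ρ.r t ∉ M.F} := by
  cases k with
  | zero => exact subset_rfl
  | succ k => exact fun t ht => ⟨ht.1, ht.2.1⟩

theorem concat_mem_owingNodes {k n : ℕ} {t : List ℕ} (ht : t ∈ owingNodes ρ k)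
    (hn : t ++ [n] ∈ ρ.T) (hF : ρ.r (t ++ [n]) ∉ M.F) : t ++ [n] ∈ owingNodes ρ (k + 1) := by
  have hlen : t.length = k := (owingNodes_subset ρ k ht).1.2
  refine ⟨⟨hn, by simp [hlen]⟩, hF, .inr ?_⟩
  rwa [List.take_left' hlen]

theorem owingNodes_succ_of_eq_empty {k : ℕ} (h : owingNodes ρ k = ∅) :
    owingNodes ρ (k + 1) = {t ∈ ρ.level (k + 1) | ρ.r t ∉ M.F} := by
  ext t
  simp [owingNodes, h]

theorem take_mem_owingNodes {N : ℕ} (hne : ∀ k ≥ N, (owingNodes ρ k).Nonempty) {i j : ℕ}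
    (hNi : N ≤ i) (hij : i ≤ j) : ∀ t ∈ owingNodes ρ j, t.take i ∈ owingNodes ρ i := by
  induction j, hij using Nat.le_induction with
  | base => exact fun t ht => by rwa [List.take_of_length_le (owingNodes_subset ρ i ht).1.2.le]
  | succ j hij ih =>
    intro t ht
    have := ht.2.2.resolve_left (hne j (hNi.trans hij)).ne_empty
    simpa [List.take_take, min_eq_left hij] using ih _ this

theorem exists_owingNodes_eq_empty (hfb : ρ.FinitelyBranching) (hacc : ρ.Accepting) (N : ℕ) :
    ∃ k ≥ N, owingNodes ρ k = ∅ := by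
  by_contra! hne
  have hmax (k : ℕ) : N ≤ max k N := le_max_right k N
  obtain ⟨g, hg⟩ := List.exists_seq_append_singleton_mem
    (V := fun k => List.take k '' owingNodes ρ (max k N))
    (by rintro k _ ⟨t, ht, rfl⟩; simp [(owingNodes_subset ρ _ ht).1.2])
    (fun k => ((hfb.finite_level _).subset fun t ht => (owingNodes_subset ρ _ ht).1).image _)
    (fun k => (hne _ (hmax k)).image _)
    (by
      rintro k _ ⟨t, ht, rfl⟩
      refine ⟨t.take (max k N), take_mem_owingNodes ρ hne (hmax k)
        (max_le_max (Nat.le_succ k) le_rfl) t ht, ?_⟩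
      simp [List.take_take])
  have hg0 : g 0 = [] := by
    obtain ⟨t, _, h⟩ := (hg 0).1
    simpa using h.symm
  have hgT (k : ℕ) : g k ∈ ρ.T := by
    obtain ⟨t, ht, h⟩ := (hg k).1
    exact h ▸ ρ.mem_of_prefix (List.take_prefix k t) (owingNodes_subset ρ _ ht).1.1
  have hgF (k : ℕ) (hk : N ≤ k) : ρ.r (g k) ∉ M.F := by
    obtain ⟨t, ht, h⟩ := (hg k).1
    rw [max_eq_left hk] at ht
    have ht' := owingNodes_subset ρ k ht
    rw [← h, List.take_of_length_le ht'.1.2.le]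
    exact ht'.2
  obtain ⟨k, hk, hF⟩ := hacc g hg0 (fun k => ⟨hgT k, (hg k).2⟩) N
  exact hgF k hk hF

noncomputable def state (k : ℕ) : M.Q → Fin 3 :=
  encode (ρ.r '' ρ.level k) (ρ.r '' owingNodes ρ k)

theorem state_zero : state ρ 0 = encode {M.q0} ({M.q0} \ M.F) := by
  simp only [state, owingNodes, Run.level_zero]
  congr 1 <;> ext q
  · simp [ρ.root_label]
  · simp only [Set.mem_image, Set.mem_ofPred_eq, Set.mem_singleton_iff, Set.mem_sdiff]
    constructor
    · rintro ⟨_, ⟨rfl, hF⟩, rfl⟩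
      exact ⟨ρ.root_label, ρ.root_label ▸ hF⟩
    · rintro ⟨rfl, hF⟩
      exact ⟨[], ⟨rfl, ρ.root_label ▸ hF⟩, ρ.root_label⟩

theorem step_state (k : ℕ) : Step M (w k) (state ρ k) (state ρ (k + 1)) := by
  have hsub (j : ℕ) : ρ.r '' owingNodes ρ j ⊆ ρ.r '' ρ.level j :=
    Set.image_mono fun t ht => (owingNodes_subset ρ j ht).1
  have hsat {t : List ℕ} (ht : t ∈ ρ.level k) : (M.δ (ρ.r t) (w k)).Sat (ρ.childLabels t) :=
    ht.2 ▸ ρ.trans t ht.1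
  simp only [Step, state, present_encode (hsub _), owing_encode]
  refine ⟨?_, fun h => ?_⟩
  · rintro _ ⟨t, ht, rfl⟩
    by_cases ho : ρ.r t ∈ ρ.r '' owingNodes ρ k
    · obtain ⟨u, hu, hut⟩ := ho
      have hu' := (owingNodes_subset ρ k hu).1
      refine ⟨ρ.childLabels u, ρ.childLabels_subset_image_level hu', hut ▸ hsat hu', fun _ => ?_⟩
      rintro _ ⟨⟨n, hn, rfl⟩, hF⟩
      exact ⟨u ++ [n], concat_mem_owingNodes ρ hu hn hF, rfl⟩
    · exact ⟨ρ.childLabels t, ρ.childLabels_subset_image_level ht, hsat ht, fun h => absurd h ho⟩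
  · rw [Set.image_eq_empty] at h
    rw [owingNodes_succ_of_eq_empty ρ h]
    ext q
    constructor
    · rintro ⟨t, ⟨ht, hF⟩, rfl⟩
      exact ⟨⟨t, ht, rfl⟩, hF⟩
    · rintro ⟨⟨t, ht, rfl⟩, hF⟩
      exact ⟨t, ⟨ht, hF⟩, rfl⟩

end Completeness

theorem lang_subset_automaton : M.Lang ⊆ (automaton M).Lang := by
  classical
  rintro w ⟨ρ, hacc⟩
  refine mem_lang_ofStep_iff.2 ⟨state ρ.prune, state_zero _, step_state _, fun N => ?_⟩
  obtain ⟨k, hk, h⟩ := exists_owingNodes_eq_empty ρ.prune ρ.prune_finitelyBranching hacc.prune N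
  exact ⟨k, hk, by simp [state, owing_encode, h]⟩

theorem lang_automaton : (automaton M).Lang = M.Lang :=
  (lang_automaton_subset M).antisymm (lang_subset_automaton M)

end MiyanoHayashi

/-- **Miyano–Hayashi dealternation**: for every alternating Büchi automaton `M` with `n`
states there is a nondeterministic Büchi automaton `B` with at most `3 ^ n` states
accepting the same ω-language. -/
theorem dealternation {A : Type} (M : ABA A) :
    ∃ B : ABA A, B.IsNondet ∧
      (@Fintype.card B.Q B.fin) ≤ 3 ^ (@Fintype.card M.Q M.fin) ∧
      B.Lang = M.Lang :=
  ⟨MiyanoHayashi.automaton M, MiyanoHayashi.isNondet_automaton M,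
    (MiyanoHayashi.card_automaton M).le, MiyanoHayashi.lang_automaton M⟩
end

section
/- For every alternating Büchi automaton A with n states there exists an alternating Büchi automaton A' with O(n²) states such that L(A') is the complement of L(A) in Σ^ω. -/
noncomputable section
open Classical

namespace PosBool

/-- The dual of a positive boolean formula. -/
def dual {Q : Type} : PosBool Q → PosBool Q
  | .tt => .ff
  | .ff => .tt
  | .var q => .var q
  | .and a b => .or a.dual b.dual
  | .or a b => .and a.dual b.dual

theorem sat_mono {Q : Type} {v v' : Set Q} (h : v ⊆ v') :
    ∀ {φ : PosBool Q}, φ.Sat v → φ.Sat v'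
  | .tt, _ => trivial
  | .ff, hs => hs.elim
  | .var q, hs => h hs
  | .and a b, hs => ⟨sat_mono h hs.1, sat_mono h hs.2⟩
  | .or a b, hs => hs.elim (fun h1 => Or.inl (sat_mono h h1)) (fun h1 => Or.inr (sat_mono h h1))

theorem sat_dual_iff {Q : Type} (v : Set Q) :
    ∀ (φ : PosBool Q), φ.dual.Sat v ↔ ¬ φ.Sat vᶜ
  | .tt => by simp [dual, Sat]
  | .ff => by simp [dual, Sat]
  | .var q => by simp [dual, Sat]
  | .and a b => by
      simp only [dual, Sat, sat_dual_iff v a, sat_dual_iff v b]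
      tauto
  | .or a b => by
      simp only [dual, Sat, sat_dual_iff v a, sat_dual_iff v b]
      tauto

theorem exists_mem_inter {Q : Type} {v v' : Set Q} {φ : PosBool Q}
    (h : φ.Sat v) (h' : φ.dual.Sat v') : ∃ q, q ∈ v ∧ q ∈ v' := by
  by_contra hc
  push_neg at hc
  have hsub : v ⊆ v'ᶜ := fun q hq hq' => hc q hq hq'
  exact (sat_dual_iff v' φ).mp h' (sat_mono hsub h)

theorem not_sat_dual {Q : Type} {v : Set Q} {φ : PosBool Q}
    (h : ¬ φ.dual.Sat v) : φ.Sat vᶜ := by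
  by_contra hc
  exact h ((sat_dual_iff v φ).mpr hc)

/-- Finite disjunction. -/
def bigOr {Q : Type} (l : List Q) : PosBool Q :=
  l.foldr (fun q acc => .or (.var q) acc) .ff

theorem sat_bigOr {Q : Type} (v : Set Q) (l : List Q) :
    (bigOr l).Sat v ↔ ∃ q ∈ l, q ∈ v := by
  induction l with
  | nil => simp [bigOr, Sat]
  | cons a l ih => simp [bigOr, Sat] at ih ⊢; rw [ih]

/-- Release/rank annotation: replace each variable `q` by the disjunction of `(q, j)` for `j ≤ i`. -/
def release {Q : Type} {m : ℕ} (i : Fin m) : PosBool Q → PosBool (Q × Fin m)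
  | .tt => .tt
  | .ff => .ff
  | .var q => bigOr (((List.finRange m).filter (fun j => j ≤ i)).map (fun j => (q, j)))
  | .and a b => .and (release i a) (release i b)
  | .or a b => .or (release i a) (release i b)

theorem sat_release_down {Q : Type} {m : ℕ} {i : Fin m} {V : Set (Q × Fin m)} :
    ∀ {φ : PosBool Q}, (release i φ).Sat V → φ.Sat {q | ∃ j, j ≤ i ∧ (q, j) ∈ V}
  | .tt, _ => trivial
  | .ff, hs => hs.elim
  | .var q, hs => by
      rw [release, sat_bigOr] at hs
      obtain ⟨p, hp, hpV⟩ := hs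
      simp only [List.mem_map, List.mem_filter, List.mem_finRange, true_and] at hp
      obtain ⟨j, hj, rfl⟩ := hp
      exact ⟨j, by simpa using hj, hpV⟩
  | .and a b, hs => ⟨sat_release_down hs.1, sat_release_down hs.2⟩
  | .or a b, hs => hs.elim (fun h => Or.inl (sat_release_down h))
      (fun h => Or.inr (sat_release_down h))

theorem sat_release_up {Q : Type} {m : ℕ} {i : Fin m} {V : Set (Q × Fin m)} {v : Set Q}
    (hv : ∀ q ∈ v, ∃ j, j ≤ i ∧ (q, j) ∈ V) :
    ∀ {φ : PosBool Q}, φ.Sat v → (release i φ).Sat V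
  | .tt, _ => trivial
  | .ff, hs => hs.elim
  | .var q, hs => by
      obtain ⟨j, hj, hV⟩ := hv q hs
      rw [release, sat_bigOr]
      exact ⟨(q, j), by simp [List.mem_filter, hj], hV⟩
  | .and a b, hs => ⟨sat_release_up hv hs.1, sat_release_up hv hs.2⟩
  | .or a b, hs => hs.elim (fun h => Or.inl (sat_release_up hv h))
      (fun h => Or.inr (sat_release_up hv h))

end PosBool

namespace ABAaux

variable {A : Type} (N : ABA A) (σ : N.Q → ℕ → Set N.Q)

/-- Encode a state as a natural number. -/
def enc (q : N.Q) : ℕ := (@Fintype.equivFin N.Q N.fin q).val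

theorem enc_injective : Function.Injective (enc N) := fun a b h =>
  (@Fintype.equivFin N.Q N.fin).injective (Fin.val_injective h)

/-- State labelling of tree nodes given in reversed form. -/
def stRev : List ℕ → N.Q
  | [] => N.q0
  | m :: l => if h : ∃ q' ∈ σ (stRev l) l.length, enc N q' = m then h.choose else N.q0

/-- Valid tree nodes (reversed form). -/
def okRev : List ℕ → Prop
  | [] => True
  | m :: l => okRev l ∧ ∃ q' ∈ σ (stRev N σ l) l.length, enc N q' = m

theorem stRev_mem {m : ℕ} {l : List ℕ} (h : ∃ q' ∈ σ (stRev N σ l) l.length, enc N q' = m) :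
    stRev N σ (m :: l) ∈ σ (stRev N σ l) l.length := by
  rw [stRev, dif_pos h]
  exact h.choose_spec.1

theorem stRev_enc {l : List ℕ} {q' : N.Q} (h : q' ∈ σ (stRev N σ l) l.length) :
    stRev N σ (enc N q' :: l) = q' := by
  have hex : ∃ q'' ∈ σ (stRev N σ l) l.length, enc N q'' = enc N q' := ⟨q', h, rfl⟩
  rw [stRev, dif_pos hex]
  exact enc_injective N hex.choose_spec.2

/-- The run tree induced by a (positional-in-(state,time)) strategy. -/
def strategyRun (w : ℕ → A) (I : N.Q → ℕ → Prop) (h0 : I N.q0 0)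
    (hsat : ∀ q k, I q k → (N.δ q (w k)).Sat (σ q k))
    (hinv : ∀ q k, I q k → ∀ q' ∈ σ q k, I q' (k + 1)) : N.Run w where
  T := {t | okRev N σ t.reverse}
  r := fun t => stRev N σ t.reverse
  root_mem := by simp [okRev]
  root_label := by simp [stRev]
  prefix_closed := by
    intro t n h
    simp only [Set.mem_setOf_eq, List.reverse_append, List.reverse_cons, List.reverse_nil,
      List.nil_append, List.cons_append] at h ⊢
    exact h.1
  trans := by
    intro t ht
    have hIok : ∀ l : List ℕ, okRev N σ l → I (stRev N σ l) l.length := by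
      intro l
      induction l with
      | nil => intro _; simpa [stRev] using h0
      | cons m l ih =>
        intro hok
        have h1 := ih hok.1
        have h2 := stRev_mem N σ hok.2
        exact hinv _ _ h1 _ h2
    have hI : I (stRev N σ t.reverse) t.length := by
      have := hIok t.reverse ht
      simpa using this
    have hset : {q | ∃ n, t ++ [n] ∈ {t | okRev N σ t.reverse} ∧
        stRev N σ (t ++ [n]).reverse = q} = σ (stRev N σ t.reverse) t.length := by
      ext q
      simp only [Set.mem_setOf_eq, List.reverse_append, List.reverse_cons, List.reverse_nil,
        List.nil_append, List.cons_append, List.singleton_append]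
      constructor
      · rintro ⟨n, ⟨hok, hex⟩, rfl⟩
        have := stRev_mem N σ hex
        simpa using this
      · intro hq
        refine ⟨enc N q, ⟨ht, ⟨q, by simpa using hq, rfl⟩⟩, ?_⟩
        have := stRev_enc N σ (q' := q) (l := t.reverse) (by simpa using hq)
        simpa using this
    show (N.δ (stRev N σ t.reverse) (w t.length)).Sat _
    rw [hset]
    exact hsat _ _ hI

/-- Branches of the strategy run are exactly σ-paths. -/
theorem strategyRun_branch (w : ℕ → A) (I : N.Q → ℕ → Prop) (h0 : I N.q0 0)
    (hsat : ∀ q k, I q k → (N.δ q (w k)).Sat (σ q k))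
    (hinv : ∀ q k, I q k → ∀ q' ∈ σ q k, I q' (k + 1))
    (f : ℕ → List ℕ) (hf0 : f 0 = [])
    (hf : ∀ k, f k ∈ (strategyRun N σ w I h0 hsat hinv).T ∧ ∃ n, f (k + 1) = f k ++ [n]) :
    ∃ g : ℕ → N.Q, (∀ k, (strategyRun N σ w I h0 hsat hinv).r (f k) = g k) ∧
      g 0 = N.q0 ∧ ∀ k, I (g k) k ∧ g (k + 1) ∈ σ (g k) k := by
  set ρ := strategyRun N σ w I h0 hsat hinv with hρ
  have hlen : ∀ k, (f k).length = k := by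
    intro k
    induction k with
    | zero => simp [hf0]
    | succ k ih =>
      obtain ⟨n, hn⟩ := (hf k).2
      simp [hn, ih]
  have hIok : ∀ l : List ℕ, okRev N σ l → I (stRev N σ l) l.length := by
    intro l
    induction l with
    | nil => intro _; simpa [stRev] using h0
    | cons m l ih =>
      intro hok
      exact hinv _ _ (ih hok.1) _ (stRev_mem N σ hok.2)
  refine ⟨fun k => ρ.r (f k), fun k => rfl, by simp [hρ, strategyRun, hf0, stRev], ?_⟩
  intro k
  constructor
  · have h1 := hIok (f k).reverse ((hf k).1)
    simpa [hρ, strategyRun, hlen k] using h1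
  · obtain ⟨n, hn⟩ := (hf k).2
    have hok : okRev N σ (f (k+1)).reverse := (hf (k+1)).1
    rw [hn] at hok
    simp only [List.reverse_append, List.reverse_cons, List.reverse_nil, List.nil_append,
      List.cons_append, List.singleton_append] at hok
    have hl : (f k).reverse.length = k := by simp [hlen k]
    have := stRev_mem N σ hok.2
    rw [hl] at this
    show ρ.r (f (k+1)) ∈ σ (ρ.r (f k)) k
    rw [hn]
    simp only [hρ, strategyRun, List.reverse_append, List.reverse_cons, List.reverse_nil,
      List.nil_append, List.cons_append, List.singleton_append]
    exact this

end ABAaux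

namespace ABAGame
open OrdinalApprox OrderHom PosBool

variable {A : Type} (M : ABA A) (w : ℕ → A)

/-- Game positions: a state together with a time. -/
abbrev Pos (M : ABA A) : Type := M.Q × ℕ

/-- Pathfinder's controlled predecessor. -/
def Cpre (S : Set (Pos M)) (p : Pos M) : Prop :=
  ((M.δ p.1 (w p.2)).dual).Sat {q' | (q', p.2 + 1) ∈ S}

theorem Cpre_mono {S S' : Set (Pos M)} (h : S ⊆ S') {p : Pos M} (hp : Cpre M w S p) :
    Cpre M w S' p := by
  unfold Cpre at hp ⊢
  exact sat_mono (v := {q' | (q', p.2 + 1) ∈ S}) (v' := {q' | (q', p.2 + 1) ∈ S'})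
    (fun q' hq' => h hq') hp

/-- Inner operator: stay while avoiding F, drop to `S` when visiting F. -/
def Phi (S : Set (Pos M)) : Set (Pos M) →o Set (Pos M) :=
  ⟨fun Y => {p | (p.1 ∈ M.F → Cpre M w S p) ∧ (p.1 ∉ M.F → Cpre M w (Y ∪ S) p)},
   fun Y Y' hY p hp => ⟨hp.1, fun hF => Cpre_mono M w (Set.union_subset_union_left S hY) (hp.2 hF)⟩⟩

theorem Phi_mono_S {S S' : Set (Pos M)} (h : S ⊆ S') (Y : Set (Pos M)) :
    Phi M w S Y ⊆ Phi M w S' Y := fun p hp =>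
  ⟨fun hF => Cpre_mono M w h (hp.1 hF),
   fun hF => Cpre_mono M w (Set.union_subset_union_right Y h) (hp.2 hF)⟩

/-- Outer operator. -/
def Psi : Set (Pos M) →o Set (Pos M) :=
  ⟨fun S => gfp (Phi M w S), fun S S' h => gfp.monotone (fun Y => Phi_mono_S M w h Y)⟩

def Lam : Ordinal := (Order.succ (Cardinal.mk (Set (Pos M)))).ord

/-- Pathfinder's winning region. -/
def R : Set (Pos M) := lfpApprox (Psi M w) ⊥ (Lam M)

theorem Psi_R : Psi M w (R M w) = R M w := by
  have := lfpApprox_ord_mem_fixedPoint (f := Psi M w) (x := (⊥ : Set (Pos M))) bot_le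
  exact this

theorem mem_lfpApprox_iff (a : Ordinal) (p : Pos M) :
    p ∈ lfpApprox (Psi M w) ⊥ a ↔ ∃ b < a, p ∈ Psi M w (lfpApprox (Psi M w) ⊥ b) := by
  rw [lfpApprox]
  simp only [bot_sup_eq, Set.iSup_eq_iUnion, Set.mem_iUnion, exists_prop]

theorem not_mem_gfpApprox_iff (f : Set (Pos M) →o Set (Pos M)) (a : Ordinal) (p : Pos M) :
    p ∉ gfpApprox f ⊤ a ↔ ∃ b < a, p ∉ f (gfpApprox f ⊤ b) := by
  rw [gfpApprox]
  simp only [top_inf_eq, Set.iInf_eq_iInter, Set.mem_iInter, not_forall, exists_prop]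

/-- Outer rank of a position. -/
def orank (p : Pos M) : Ordinal := sInf {α | p ∈ Psi M w (lfpApprox (Psi M w) ⊥ α)}

theorem orank_spec {p : Pos M} (hp : p ∈ R M w) :
    p ∈ Psi M w (lfpApprox (Psi M w) ⊥ (orank M w p)) := by
  obtain ⟨b, _, hb⟩ := (mem_lfpApprox_iff M w (Lam M) p).mp hp
  exact csInf_mem (s := {α | p ∈ Psi M w (lfpApprox (Psi M w) ⊥ α)}) ⟨b, hb⟩

theorem orank_le {p : Pos M} {b : Ordinal} (hb : p ∈ Psi M w (lfpApprox (Psi M w) ⊥ b)) :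
    orank M w p ≤ b := csInf_le' hb

theorem orank_lt_Lam {p : Pos M} (hp : p ∈ R M w) : orank M w p < Lam M := by
  obtain ⟨b, hbΛ, hb⟩ := (mem_lfpApprox_iff M w (Lam M) p).mp hp
  exact lt_of_le_of_lt (orank_le M w hb) hbΛ

/-- Pathfinder's positional strategy. -/
def σP (p : Pos M) : Set M.Q :=
  if p.1 ∈ M.F then {q' | (q', p.2 + 1) ∈ lfpApprox (Psi M w) ⊥ (orank M w p)}
  else {q' | (q', p.2 + 1) ∈ gfp (Phi M w (lfpApprox (Psi M w) ⊥ (orank M w p))) ∪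
        lfpApprox (Psi M w) ⊥ (orank M w p)}

theorem σP_sat {p : Pos M} (hp : p ∈ R M w) :
    ((M.δ p.1 (w p.2)).dual).Sat (σP M w p) := by
  have h1 := orank_spec M w hp
  have h2 : p ∈ Phi M w (lfpApprox (Psi M w) ⊥ (orank M w p))
      (gfp (Phi M w (lfpApprox (Psi M w) ⊥ (orank M w p)))) := by
    have h1' : p ∈ gfp (Phi M w (lfpApprox (Psi M w) ⊥ (orank M w p))) := h1
    rw [← map_gfp (Phi M w (lfpApprox (Psi M w) ⊥ (orank M w p)))] at h1'
    exact h1'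
  by_cases hF : p.1 ∈ M.F
  · have := h2.1 hF
    rw [σP, if_pos hF]
    exact this
  · have := h2.2 hF
    rw [σP, if_neg hF]
    exact this

theorem σP_mem_R {p : Pos M} (hp : p ∈ R M w) {q' : M.Q} (hq : q' ∈ σP M w p) :
    (q', p.2 + 1) ∈ R M w := by
  have hsub : lfpApprox (Psi M w) ⊥ (orank M w p) ⊆ R M w :=
    by have := lfpApprox_mono_right (f := Psi M w) (x := ⊥) (le_of_lt (orank_lt_Lam M w hp)); exact this
  have hsub2 : gfp (Phi M w (lfpApprox (Psi M w) ⊥ (orank M w p))) ⊆ R M w := by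
    have h1 : Psi M w (lfpApprox (Psi M w) ⊥ (orank M w p)) ⊆ Psi M w (R M w) :=
      (Psi M w).monotone hsub
    rw [Psi_R] at h1
    exact h1
  by_cases hF : p.1 ∈ M.F
  · rw [σP, if_pos hF] at hq
    exact hsub hq
  · rw [σP, if_neg hF] at hq
    rcases hq with hq | hq
    · exact hsub2 hq
    · exact hsub hq

theorem σP_orank_le {p : Pos M} (hp : p ∈ R M w) {q' : M.Q} (hq : q' ∈ σP M w p) :
    orank M w (q', p.2 + 1) ≤ orank M w p := by
  have hlt : (q', p.2 + 1) ∈ lfpApprox (Psi M w) ⊥ (orank M w p) →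
      orank M w (q', p.2 + 1) < orank M w p := by
    intro h
    obtain ⟨b, hb, hmem⟩ := (mem_lfpApprox_iff M w _ _).mp h
    exact lt_of_le_of_lt (orank_le M w hmem) hb
  by_cases hF : p.1 ∈ M.F
  · rw [σP, if_pos hF] at hq
    exact le_of_lt (hlt hq)
  · rw [σP, if_neg hF] at hq
    rcases hq with hq | hq
    · exact orank_le M w hq
    · exact le_of_lt (hlt hq)

theorem σP_orank_lt {p : Pos M} (hp : p ∈ R M w) (hF : p.1 ∈ M.F) {q' : M.Q}
    (hq : q' ∈ σP M w p) : orank M w (q', p.2 + 1) < orank M w p := by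
  rw [σP, if_pos hF] at hq
  obtain ⟨b, hb, hmem⟩ := (mem_lfpApprox_iff M w _ _).mp hq
  exact lt_of_le_of_lt (orank_le M w hmem) hb

/-- Ordinals admit no infinite descending sequence. -/
theorem no_ordinal_descent (h : ℕ → Ordinal) (H : ∀ k, h (k + 1) < h k) : False := by
  obtain ⟨m, ⟨k, hk⟩, hmin⟩ := Ordinal.lt_wf.has_min (Set.range h) ⟨h 0, Set.mem_range_self 0⟩
  exact hmin (h (k + 1)) (Set.mem_range_self _) (hk ▸ H k)

theorem R_eq_gfpApprox : R M w = gfpApprox (Phi M w (R M w)) ⊤ (Lam M) := by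
  have h1 : Psi M w (R M w) = R M w := Psi_R M w
  have h2 : gfpApprox (Phi M w (R M w)) ⊤ (Lam M) = gfp (Phi M w (R M w)) :=
    gfpApprox_ord_eq_gfp _
  rw [h2]
  exact h1.symm

/-- Inner rank for Automaton's strategy. -/
def irank (p : Pos M) : Ordinal :=
  sInf {γ | p ∉ Phi M w (R M w) (gfpApprox (Phi M w (R M w)) ⊤ γ)}

theorem irank_spec {p : Pos M} (hp : p ∉ R M w) :
    p ∉ Phi M w (R M w) (gfpApprox (Phi M w (R M w)) ⊤ (irank M w p)) := by
  rw [R_eq_gfpApprox] at hp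
  obtain ⟨b, _, hb⟩ := (not_mem_gfpApprox_iff M (Phi M w (R M w)) (Lam M) p).mp hp
  exact csInf_mem (s := {γ | p ∉ Phi M w (R M w) (gfpApprox (Phi M w (R M w)) ⊤ γ)}) ⟨b, hb⟩

theorem irank_le {p : Pos M} {b : Ordinal}
    (hb : p ∉ Phi M w (R M w) (gfpApprox (Phi M w (R M w)) ⊤ b)) : irank M w p ≤ b :=
  csInf_le' hb

/-- Automaton's positional strategy on the complement of `R`. -/
def σA (p : Pos M) : Set M.Q :=
  if p.1 ∈ M.F then {q' | (q', p.2 + 1) ∉ R M w}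
  else {q' | (q', p.2 + 1) ∉ gfpApprox (Phi M w (R M w)) ⊤ (irank M w p) ∧
        (q', p.2 + 1) ∉ R M w}

theorem σA_spec {p : Pos M} (hp : p ∉ R M w) :
    (M.δ p.1 (w p.2)).Sat (σA M w p) := by
  have h2 := irank_spec M w hp
  by_cases hF : p.1 ∈ M.F
  · have hnc : ¬ Cpre M w (R M w) p := fun hc =>
      h2 ⟨fun _ => hc, fun hnF => absurd hF hnF⟩
    unfold Cpre at hnc
    have := not_sat_dual hnc
    rw [σA, if_pos hF]
    have hset : {q' | (q', p.2 + 1) ∈ R M w}ᶜ = {q' | (q', p.2 + 1) ∉ R M w} := rfl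
    rw [hset] at this
    exact this
  · have hnc : ¬ Cpre M w (gfpApprox (Phi M w (R M w)) ⊤ (irank M w p) ∪ R M w) p := fun hc =>
      h2 ⟨fun hFp => absurd hFp hF, fun _ => hc⟩
    unfold Cpre at hnc
    have := not_sat_dual hnc
    rw [σA, if_neg hF]
    have hset : {q' | (q', p.2 + 1) ∈ gfpApprox (Phi M w (R M w)) ⊤ (irank M w p) ∪ R M w}ᶜ =
        {q' | (q', p.2 + 1) ∉ gfpApprox (Phi M w (R M w)) ⊤ (irank M w p) ∧
          (q', p.2 + 1) ∉ R M w} := by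
      ext q'
      simp [Set.mem_union, not_or]
    rw [hset] at this
    exact this

theorem σA_not_mem_R {p : Pos M} (hp : p ∉ R M w) {q' : M.Q} (hq : q' ∈ σA M w p) :
    (q', p.2 + 1) ∉ R M w := by
  by_cases hF : p.1 ∈ M.F
  · rw [σA, if_pos hF] at hq; exact hq
  · rw [σA, if_neg hF] at hq; exact hq.2

theorem σA_irank_lt {p : Pos M} (hp : p ∉ R M w) (hF : p.1 ∉ M.F) {q' : M.Q}
    (hq : q' ∈ σA M w p) : irank M w (q', p.2 + 1) < irank M w p := by
  rw [σA, if_neg hF] at hq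
  obtain ⟨b, hb, hmem⟩ := (not_mem_gfpApprox_iff M _ _ _).mp hq.1
  exact lt_of_le_of_lt (irank_le M w hmem) hb

/-- If the initial position is not in Pathfinder's region then `M` accepts `w`. -/
theorem accept_of_not_R (h : ((M.q0, 0) : Pos M) ∉ R M w) : w ∈ M.Lang := by
  have h0 : ((M.q0, 0) : Pos M) ∉ R M w := h
  refine ⟨ABAaux.strategyRun M (fun q k => σA M w (q, k)) w (fun q k => (q, k) ∉ R M w) h0
    (fun q k hq => σA_spec M w hq) (fun q k hq q' hq' => σA_not_mem_R M w hq hq'), ?_⟩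
  intro f hf0 hf N
  obtain ⟨g, hg, hg0, hgpath⟩ := ABAaux.strategyRun_branch M (fun q k => σA M w (q, k)) w
    (fun q k => (q, k) ∉ R M w) h0 (fun q k hq => σA_spec M w hq)
    (fun q k hq q' hq' => σA_not_mem_R M w hq hq') f hf0 hf
  by_contra hc
  push_neg at hc
  have hc' : ∀ k ≥ N, g k ∉ M.F := by
    intro k hk hgk
    exact absurd hgk (by have := hc k hk; rw [hg k] at this; exact this)
  have hdesc : ∀ j, irank M w (g (N + j + 1), N + j + 1) < irank M w (g (N + j), N + j) := by
    intro j
    have h1 := (hgpath (N + j)).1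
    have h2 := (hgpath (N + j)).2
    exact σA_irank_lt M w h1 (hc' (N + j) (Nat.le_add_right N j)) h2
  exact no_ordinal_descent (fun j => irank M w (g (N + j), N + j)) hdesc

/-! ### The run DAG of Pathfinder's positional strategy and the Kupferman–Vardi ranks -/

/-- Levels of the run DAG. -/
def Hset : ℕ → Set M.Q
  | 0 => {M.q0}
  | k + 1 => {q' | ∃ q ∈ Hset k, q' ∈ σP M w (q, k)}

/-- The vertices of the run DAG. -/
def HH : Set (Pos M) := {p | p.1 ∈ Hset M w p.2}

theorem HH_sub_R (hR : ((M.q0, 0) : Pos M) ∈ R M w) : ∀ p ∈ HH M w, p ∈ R M w := by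
  have : ∀ k, ∀ q ∈ Hset M w k, ((q, k) : Pos M) ∈ R M w := by
    intro k
    induction k with
    | zero => intro q hq; rw [Hset] at hq; rcases hq with rfl; exact hR
    | succ k ih =>
      rintro q ⟨q₀, hq₀, hq⟩
      exact σP_mem_R M w (ih q₀ hq₀) hq
  rintro ⟨q, k⟩ hp
  exact this k q hp

/-- Edges of the run DAG. -/
def Edge (p p' : Pos M) : Prop := p'.2 = p.2 + 1 ∧ p'.1 ∈ σP M w p

theorem Edge_HH {p p' : Pos M} (hp : p ∈ HH M w) (he : Edge M w p p') : p' ∈ HH M w := by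
  obtain ⟨q', k'⟩ := p'
  obtain ⟨h1, h2⟩ := he
  simp only at h1
  subst h1
  exact ⟨p.1, hp, by obtain ⟨q, k⟩ := p; exact h2⟩

/-- Reachability within a set of vertices. -/
def ReachIn (V : Set (Pos M)) : Pos M → Pos M → Prop :=
  Relation.ReflTransGen (fun a b => a ∈ V ∧ b ∈ V ∧ Edge M w a b)

/-- A vertex with a finite set of descendants. -/
def finiteIn (V : Set (Pos M)) (p : Pos M) : Prop := {p' | ReachIn M w V p p'}.Finite

/-- A vertex from which no accepting state is reachable. -/
def freeIn (V : Set (Pos M)) (p : Pos M) : Prop := ∀ p', ReachIn M w V p p' → p'.1 ∉ M.F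

theorem freeIn_reach {V : Set (Pos M)} {p p' : Pos M} (hf : freeIn M w V p)
    (hr : ReachIn M w V p p') : freeIn M w V p' := fun p'' hr' =>
  hf p'' (Relation.ReflTransGen.trans hr hr')

theorem reach_snd_le {V : Set (Pos M)} {p p' : Pos M} (hr : ReachIn M w V p p') :
    p.2 ≤ p'.2 := by
  induction hr with
  | refl => exact le_refl _
  | tail _ hstep ih => exact le_trans ih (by rw [hstep.2.2.1]; omega)

theorem reach_mem {V : Set (Pos M)} {p p' : Pos M} (hr : ReachIn M w V p p') :
    p' = p ∨ p' ∈ V := by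
  induction hr with
  | refl => exact Or.inl rfl
  | tail _ hstep _ => exact Or.inr hstep.2.1

theorem orank_reach (hR : ((M.q0, 0) : Pos M) ∈ R M w) {V : Set (Pos M)} (hV : V ⊆ HH M w)
    {p p' : Pos M} (hr : ReachIn M w V p p') : orank M w p' ≤ orank M w p := by
  induction hr with
  | refl => exact le_refl _
  | @tail b c _ hstep ih =>
    refine le_trans ?_ ih
    have hbR : b ∈ R M w := HH_sub_R M w hR b (hV hstep.1)
    have := σP_orank_le M w hbR hstep.2.2.2
    obtain ⟨q', k'⟩ := c
    have h1 : k' = b.2 + 1 := hstep.2.2.1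
    subst h1
    exact this

/-- Finitely many successors, so infinite reach means an infinite successor. -/
theorem exists_succ_of_not_finiteIn {V : Set (Pos M)} {p : Pos M}
    (h : ¬ finiteIn M w V p) :
    ∃ p', (p ∈ V ∧ p' ∈ V ∧ Edge M w p p') ∧ ¬ finiteIn M w V p' := by
  by_contra hc
  push_neg at hc
  apply h
  letI := M.fin
  have hsub : {p' | ReachIn M w V p p'} ⊆
      {p} ∪ ⋃ p' ∈ {x | p ∈ V ∧ x ∈ V ∧ Edge M w p x}, {x | ReachIn M w V p' x} := by
    intro x hx
    rcases Relation.ReflTransGen.cases_head hx with rfl | ⟨c, hc1, hc2⟩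
    · exact Or.inl rfl
    · exact Or.inr (Set.mem_biUnion hc1 hc2)
  refine Set.Finite.subset (Set.Finite.union (Set.finite_singleton p) ?_) hsub
  refine Set.Finite.biUnion ?_ ?_
  · refine Set.Finite.subset (Set.finite_range (fun q' : M.Q => ((q', p.2 + 1) : Pos M))) ?_
    rintro ⟨q', k'⟩ ⟨_, _, hk, _⟩
    exact ⟨q', by simp only at hk; rw [hk]⟩
  · intro p' hp'
    exact hc p' hp'

/-- The Kupferman–Vardi sequence of subgraphs. -/
def KVG : ℕ → Set (Pos M)
  | 0 => HH M w
  | i + 1 => KVG i \ (if Even i then {p | finiteIn M w (KVG i) p} else {p | freeIn M w (KVG i) p})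

theorem KVG_succ_subset (i : ℕ) : KVG M w (i + 1) ⊆ KVG M w i := by
  rw [KVG]; exact Set.diff_subset

theorem KVG_antitone : ∀ {i j : ℕ}, i ≤ j → KVG M w j ⊆ KVG M w i := by
  intro i j h
  induction h with
  | refl => exact subset_rfl
  | step h ih => exact fun p hp => ih (KVG_succ_subset M w _ hp)

theorem KVG_removed {i : ℕ} {p : Pos M} (hp : p ∈ KVG M w i) (hp' : p ∉ KVG M w (i + 1)) :
    (Even i → finiteIn M w (KVG M w i) p) ∧ (¬ Even i → freeIn M w (KVG M w i) p) := by
  rw [KVG] at hp'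
  constructor
  · intro he
    by_contra hc
    exact hp' ⟨hp, by rw [if_pos he]; exact hc⟩
  · intro he
    by_contra hc
    exact hp' ⟨hp, by rw [if_neg he]; exact hc⟩

/-- Each vertex of `KVG (2i+1)` has a successor inside it. -/
theorem KVG_odd_succ {i : ℕ} {p : Pos M} (hp : p ∈ KVG M w (2 * i + 1)) :
    ∃ p', Edge M w p p' ∧ p' ∈ KVG M w (2 * i + 1) := by
  have hp0 : p ∈ KVG M w (2 * i) := KVG_succ_subset M w _ hp
  have hninf : ¬ finiteIn M w (KVG M w (2 * i)) p := by
    intro hc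
    rw [KVG] at hp
    exact hp.2 (by rw [if_pos (even_two_mul i)]; exact hc)
  obtain ⟨p', ⟨_, hp'V, he⟩, hp'inf⟩ := exists_succ_of_not_finiteIn M w hninf
  refine ⟨p', he, ?_⟩
  rw [KVG]
  exact ⟨hp'V, by rw [if_pos (even_two_mul i)]; exact hp'inf⟩

/-- If `KVG (2i+1)` is nonempty, it contains an `F`-free vertex. -/
theorem KVG_free_exists (hR : ((M.q0, 0) : Pos M) ∈ R M w) {i : ℕ}
    (hne : (KVG M w (2 * i + 1)).Nonempty) :
    ∃ p ∈ KVG M w (2 * i + 1), freeIn M w (KVG M w (2 * i + 1)) p := by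
  by_contra hcon
  push_neg at hcon
  set G' := KVG M w (2 * i + 1) with hG'
  have hG'HH : G' ⊆ HH M w := KVG_antitone M w (Nat.zero_le _)
  -- pick a vertex of minimal outer rank
  obtain ⟨α, ⟨p0, hp0, hα⟩, hmin⟩ := Ordinal.lt_wf.has_min (orank M w '' G')
    (hne.image (orank M w))
  -- it reaches an F-vertex inside G'
  have hreach : ∃ pf, ReachIn M w G' p0 pf ∧ pf.1 ∈ M.F := by
    have := hcon p0 hp0
    unfold freeIn at this
    push_neg at this
    obtain ⟨pf, h1, h2⟩ := this
    exact ⟨pf, h1, h2⟩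
  obtain ⟨pf, hrf, hfF⟩ := hreach
  have hpfG' : pf ∈ G' := by
    rcases reach_mem M w hrf with rfl | h
    · exact hp0
    · exact h
  obtain ⟨p', he, hp'G'⟩ := KVG_odd_succ M w hpfG'
  have hpfR : pf ∈ R M w := HH_sub_R M w hR pf (hG'HH hpfG')
  have h1 : orank M w p' < orank M w pf := by
    obtain ⟨q', k'⟩ := p'
    have hk : k' = pf.2 + 1 := he.1
    subst hk
    exact σP_orank_lt M w hpfR hfF he.2
  have h2 : orank M w pf ≤ orank M w p0 := orank_reach M w hR hG'HH hrf
  have h3 : orank M w p' < α := by rw [← hα]; exact lt_of_lt_of_le h1 h2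
  exact hmin (orank M w p') ⟨p', hp'G', rfl⟩ h3

/-- From a vertex of `KVG (2i+1)` there are reachable vertices at every later level. -/
theorem KVG_reach_all_levels {i : ℕ} {p : Pos M} (hp : p ∈ KVG M w (2 * i + 1)) :
    ∀ k, p.2 ≤ k → ∃ p', ReachIn M w (KVG M w (2 * i + 1)) p p' ∧ p'.2 = k ∧
      p' ∈ KVG M w (2 * i + 1) := by
  intro k hk
  induction k, hk using Nat.le_induction with
  | base => exact ⟨p, Relation.ReflTransGen.refl, rfl, hp⟩
  | succ k hk ih =>
    obtain ⟨p', hr, hlev, hmem⟩ := ih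
    obtain ⟨p'', he, hmem''⟩ := KVG_odd_succ M w hmem
    refine ⟨p'', Relation.ReflTransGen.tail hr ⟨hmem, hmem'', he⟩, ?_, hmem''⟩
    rw [he.1, hlev]

theorem KVG_width (hR : ((M.q0, 0) : Pos M) ∈ R M w) :
    ∀ i : ℕ, ∃ l : ℕ, ∀ k, l ≤ k →
      {q : M.Q | ((q, k) : Pos M) ∈ KVG M w (2 * i)}.ncard ≤ (@Fintype.card M.Q M.fin) - i := by
  letI := M.fin
  intro i
  induction i with
  | zero =>
    refine ⟨0, fun k _ => ?_⟩
    simp only [Nat.sub_zero]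
    calc {q : M.Q | ((q, k) : Pos M) ∈ KVG M w 0}.ncard
        ≤ (Set.univ : Set M.Q).ncard := Set.ncard_le_ncard (Set.subset_univ _) Set.finite_univ
      _ = Fintype.card M.Q := by rw [Set.ncard_univ, Nat.card_eq_fintype_card]
  | succ i ih =>
    obtain ⟨l, hl⟩ := ih
    by_cases hne : (KVG M w (2 * i + 1)).Nonempty
    · obtain ⟨ps, hps, hfree⟩ := KVG_free_exists M w hR hne
      refine ⟨max l ps.2, fun k hk => ?_⟩
      obtain ⟨p', hr, hlev, hmem'⟩ := KVG_reach_all_levels M w hps k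
        (le_trans (le_max_right _ _) hk)
      have hfree' : freeIn M w (KVG M w (2 * i + 1)) p' := freeIn_reach M w hfree hr
      have hnotin : p' ∉ KVG M w (2 * i + 2) := by
        rw [show 2 * i + 2 = (2 * i + 1) + 1 by ring, KVG]
        rw [if_neg (by simp [Nat.even_add_one, Nat.even_add_one, parity_simps])]
        rintro ⟨_, hc⟩
        exact hc hfree'
      have hp'0 : p' ∈ KVG M w (2 * i) := KVG_antitone M w (by omega) hmem'
      have hmem1 : p'.1 ∈ {q : M.Q | ((q, k) : Pos M) ∈ KVG M w (2 * i)} := by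
        have h' : ((p'.1, k) : Pos M) ∈ KVG M w (2 * i) := by rw [← hlev]; exact hp'0
        exact h'
      have hsub : {q : M.Q | ((q, k) : Pos M) ∈ KVG M w (2 * (i + 1))} ⊆
          {q : M.Q | ((q, k) : Pos M) ∈ KVG M w (2 * i)} \ {p'.1} := by
        intro q hq
        have hq2i : ((q, k) : Pos M) ∈ KVG M w (2 * i) :=
          KVG_antitone M w (by omega) hq
        refine ⟨hq2i, ?_⟩
        simp only [Set.mem_singleton_iff]
        rintro rfl
        apply hnotin
        have : ((p'.1, k) : Pos M) = p' := by
          obtain ⟨q', k'⟩ := p'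
          simp only at hlev ⊢
          rw [hlev]
        rw [show 2 * (i + 1) = 2 * i + 2 by ring] at hq
        rw [← this]
        exact hq
      calc {q : M.Q | ((q, k) : Pos M) ∈ KVG M w (2 * (i + 1))}.ncard
          ≤ ({q : M.Q | ((q, k) : Pos M) ∈ KVG M w (2 * i)} \ {p'.1}).ncard :=
            Set.ncard_le_ncard hsub (Set.Finite.subset Set.finite_univ (Set.subset_univ _))
        _ = {q : M.Q | ((q, k) : Pos M) ∈ KVG M w (2 * i)}.ncard - 1 := by
            rw [← Set.ncard_diff_singleton_add_one hmem1
              (Set.Finite.subset Set.finite_univ (Set.subset_univ _))]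
            omega
        _ ≤ Fintype.card M.Q - (i + 1) := by
            have := hl k (le_trans (le_max_left _ _) hk)
            omega
    · refine ⟨0, fun k _ => ?_⟩
      have hempty : KVG M w (2 * (i + 1)) = ∅ := by
        rw [Set.not_nonempty_iff_eq_empty] at hne
        have : KVG M w (2 * (i + 1)) ⊆ KVG M w (2 * i + 1) := KVG_antitone M w (by omega)
        rw [hne] at this
        exact Set.subset_empty_iff.mp this
      simp [hempty]

theorem KVG_empty (hR : ((M.q0, 0) : Pos M) ∈ R M w) (p : Pos M) :
    p ∉ KVG M w (2 * (@Fintype.card M.Q M.fin) + 1) := by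
  letI := M.fin
  set n := Fintype.card M.Q with hn
  obtain ⟨l, hl⟩ := KVG_width M w hR n
  have hslice : ∀ k, l ≤ k → {q : M.Q | ((q, k) : Pos M) ∈ KVG M w (2 * n)} = ∅ := by
    intro k hk
    have := hl k hk
    rw [Nat.sub_self, Nat.le_zero] at this
    exact (Set.ncard_eq_zero (Set.Finite.subset Set.finite_univ (Set.subset_univ _))).mp this
  intro hp
  have hp2n : p ∈ KVG M w (2 * n) := KVG_succ_subset M w _ hp
  have hfin : finiteIn M w (KVG M w (2 * n)) p := by
    have hsub : {p' | ReachIn M w (KVG M w (2 * n)) p p'} ⊆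
        {p} ∪ {x : Pos M | x.2 < l} := by
      intro x hx
      rcases reach_mem M w hx with rfl | hxV
      · exact Or.inl rfl
      · refine Or.inr ?_
        by_contra hge
        simp only [Set.mem_setOf_eq, not_lt] at hge
        have hsl := hslice x.2 hge
        have hx1 : x.1 ∈ {q : M.Q | ((q, x.2) : Pos M) ∈ KVG M w (2 * n)} := by
          have h' : ((x.1, x.2) : Pos M) ∈ KVG M w (2 * n) := hxV
          exact h'
        rw [hsl] at hx1
        exact hx1
    refine Set.Finite.subset (Set.Finite.union (Set.finite_singleton p) ?_) hsub
    have : {x : Pos M | x.2 < l} ⊆ (Set.univ : Set M.Q) ×ˢ (Set.Iio l) := by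
      rintro ⟨q, k⟩ hk
      exact ⟨trivial, hk⟩
    exact Set.Finite.subset (Set.Finite.prod Set.finite_univ (Set.finite_Iio l)) this
  rw [KVG, if_pos (even_two_mul n)] at hp
  exact hp.2 hfin

/-- The Kupferman–Vardi rank of a DAG vertex. -/
def KVrank (p : Pos M) : ℕ := sInf {i | p ∉ KVG M w (i + 1)}

theorem KVrank_le_2n (hR : ((M.q0, 0) : Pos M) ∈ R M w) (p : Pos M) :
    KVrank M w p ≤ 2 * (@Fintype.card M.Q M.fin) :=
  Nat.sInf_le (KVG_empty M w hR p)

theorem KVrank_not_mem (hR : ((M.q0, 0) : Pos M) ∈ R M w) (p : Pos M) :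
    p ∉ KVG M w (KVrank M w p + 1) := by
  have h := Nat.sInf_mem (s := {i | p ∉ KVG M w (i + 1)})
    ⟨2 * (@Fintype.card M.Q M.fin), KVG_empty M w hR p⟩
  exact h

theorem KVrank_mem {p : Pos M} (hp : p ∈ HH M w) : p ∈ KVG M w (KVrank M w p) := by
  by_contra hc
  rcases Nat.eq_zero_or_pos (KVrank M w p) with h0 | hpos
  · rw [h0] at hc
    exact hc hp
  · obtain ⟨j, hj⟩ := Nat.exists_eq_add_of_lt hpos
    rw [hj, zero_add] at hc
    have h2 : KVrank M w p ≤ j := Nat.sInf_le hc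
    omega

theorem mem_KVG_of_le_KVrank {p : Pos M} (hp : p ∈ HH M w) {i : ℕ} (hi : i ≤ KVrank M w p) :
    p ∈ KVG M w i :=
  KVG_antitone M w hi (KVrank_mem M w hp)

theorem KVrank_le_of_not_mem {p : Pos M} {i : ℕ} (h : p ∉ KVG M w (i + 1)) :
    KVrank M w p ≤ i := Nat.sInf_le h

/-- Ranks do not increase along edges of the DAG. -/
theorem KVrank_edge (hR : ((M.q0, 0) : Pos M) ∈ R M w) {p p' : Pos M} (hp : p ∈ HH M w)
    (he : Edge M w p p') : KVrank M w p' ≤ KVrank M w p := by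
  set i := KVrank M w p with hi
  have hpi : p ∈ KVG M w i := KVrank_mem M w hp
  have hpni : p ∉ KVG M w (i + 1) := KVrank_not_mem M w hR p
  apply KVrank_le_of_not_mem
  intro hp'
  have hp'i : p' ∈ KVG M w i := KVG_succ_subset M w _ hp'
  have hstep : ReachIn M w (KVG M w i) p p' :=
    Relation.ReflTransGen.single ⟨hpi, hp'i, he⟩
  have hrem := KVG_removed M w hpi hpni
  by_cases heven : Even i
  · have hfin := hrem.1 heven
    have hfin' : finiteIn M w (KVG M w i) p' := by
      refine Set.Finite.subset hfin ?_
      intro x hx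
      exact Relation.ReflTransGen.trans hstep hx
    rw [KVG, if_pos heven] at hp'
    exact hp'.2 hfin'
  · have hfree := hrem.2 heven
    have hfree' : freeIn M w (KVG M w i) p' := freeIn_reach M w hfree hstep
    rw [KVG, if_neg heven] at hp'
    exact hp'.2 hfree'

/-- Vertices of odd rank are not accepting. -/
theorem KVrank_odd_not_F (hR : ((M.q0, 0) : Pos M) ∈ R M w) {p : Pos M} (hp : p ∈ HH M w)
    (hodd : ¬ Even (KVrank M w p)) : p.1 ∉ M.F := by
  have hrem := KVG_removed M w (KVrank_mem M w hp) (KVrank_not_mem M w hR p)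
  exact hrem.2 hodd p Relation.ReflTransGen.refl

/-- No infinite path can stay forever at a fixed even rank. -/
theorem KVrank_no_constant_even (hR : ((M.q0, 0) : Pos M) ∈ R M w) (g : ℕ → M.Q) (k0 : ℕ)
    (hmem : ∀ j, ((g j, k0 + j) : Pos M) ∈ HH M w)
    (hedge : ∀ j, Edge M w (g j, k0 + j) (g (j + 1), k0 + (j + 1)))
    {i : ℕ} (hconst : ∀ j, KVrank M w ((g j, k0 + j) : Pos M) = i) (heven : Even i) :
    False := by
  have hmemi : ∀ j, ((g j, k0 + j) : Pos M) ∈ KVG M w i := fun j =>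
    mem_KVG_of_le_KVrank M w (hmem j) (le_of_eq (hconst j).symm)
  have hreach : ∀ j, ReachIn M w (KVG M w i) (g 0, k0 + 0) (g j, k0 + j) := by
    intro j
    induction j with
    | zero => exact Relation.ReflTransGen.refl
    | succ j ih =>
      exact Relation.ReflTransGen.tail ih ⟨hmemi j, hmemi (j + 1), hedge j⟩
  have h0 : ((g 0, k0 + 0) : Pos M) ∉ KVG M w (i + 1) := by
    have h1 := KVrank_not_mem M w hR ((g 0, k0 + 0) : Pos M)
    rw [hconst 0] at h1
    exact h1
  have hrem := KVG_removed M w (hmemi 0) h0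
  have hfin := hrem.1 heven
  have hinf : {p' | ReachIn M w (KVG M w i) (g 0, k0 + 0) p'}.Infinite := by
    refine Set.infinite_of_injective_forall_mem
      (f := fun j : ℕ => ((g j, k0 + j) : Pos M)) ?_ hreach
    intro a b hab
    simpa using congrArg Prod.snd hab
  exact hinf hfin

end ABAGame

/-! ### The complement automaton -/

namespace ABACompl
open PosBool ABAGame

variable {A : Type} (M : ABA A)

/-- Number of states of `M`. -/
def n (M : ABA A) : ℕ := @Fintype.card M.Q M.fin

/-- The complement automaton: states are states of `M` with a rank annotation. -/
def complA : ABA A where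
  Q := M.Q × Fin (2 * n M + 1)
  fin := @instFintypeProd _ _ M.fin (Fin.fintype _)
  q0 := (M.q0, ⟨2 * n M, by omega⟩)
  δ := fun qi a => if qi.1 ∈ M.F ∧ ¬ Even ((qi.2 : ℕ)) then PosBool.ff
       else PosBool.release qi.2 ((M.δ qi.1 a).dual)
  F := {qi | ¬ Even ((qi.2 : ℕ))}

theorem complA_δ_ff {qi : (complA M).Q} {a : A} (h : qi.1 ∈ M.F) (h2 : ¬ Even ((qi.2 : ℕ))) :
    (complA M).δ qi a = PosBool.ff := by
  show (if qi.1 ∈ M.F ∧ ¬ Even ((qi.2 : ℕ)) then PosBool.ff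
    else PosBool.release qi.2 ((M.δ qi.1 a).dual)) = PosBool.ff
  rw [if_pos ⟨h, h2⟩]

theorem complA_δ_rel {qi : (complA M).Q} {a : A} (h : ¬ (qi.1 ∈ M.F ∧ ¬ Even ((qi.2 : ℕ)))) :
    (complA M).δ qi a = PosBool.release qi.2 ((M.δ qi.1 a).dual) := by
  show (if qi.1 ∈ M.F ∧ ¬ Even ((qi.2 : ℕ)) then PosBool.ff
    else PosBool.release qi.2 ((M.δ qi.1 a).dual)) = _
  rw [if_neg h]

variable (w : ℕ → A)

/-- Rank as an element of `Fin (2n+1)`. -/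
def rkF (p : Pos M) : Fin (2 * n M + 1) := ⟨min (KVrank M w p) (2 * n M), by omega⟩

/-- Strategy for the complement automaton. -/
def σC (qi : (complA M).Q) (k : ℕ) : Set (complA M).Q :=
  {x | x.1 ∈ σP M w (qi.1, k) ∧ x.2 = rkF M w (x.1, k + 1)}

/-- Invariant for the complement automaton's run. -/
def IC (qi : (complA M).Q) (k : ℕ) : Prop :=
  ((qi.1, k) : Pos M) ∈ HH M w ∧ KVrank M w (qi.1, k) ≤ (qi.2 : ℕ) ∧
    (¬ Even ((qi.2 : ℕ)) → qi.1 ∉ M.F)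

theorem compl_accepts (hR : ((M.q0, 0) : Pos M) ∈ R M w) : w ∈ (complA M).Lang := by
  have hrk_eq : ∀ p : Pos M, ((rkF M w p : ℕ)) = KVrank M w p := by
    intro p
    show min (KVrank M w p) (2 * n M) = KVrank M w p
    exact min_eq_left (KVrank_le_2n M w hR p)
  have h0 : IC M w (complA M).q0 0 := by
    refine ⟨?_, ?_, ?_⟩
    · show M.q0 ∈ Hset M w 0
      rw [Hset]; rfl
    · exact KVrank_le_2n M w hR _
    · intro h
      exact absurd (even_two_mul (n M)) h
  have hsat : ∀ qi k, IC M w qi k → ((complA M).δ qi (w k)).Sat (σC M w qi k) := by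
    intro qi k hI
    have hguard : ¬ (qi.1 ∈ M.F ∧ ¬ Even ((qi.2 : ℕ))) := fun ⟨hF, hodd⟩ => hI.2.2 hodd hF
    rw [complA_δ_rel M hguard]
    have hqiR : ((qi.1, k) : Pos M) ∈ R M w := HH_sub_R M w hR _ hI.1
    have hsatP := σP_sat M w hqiR
    refine sat_release_up ?_ hsatP
    intro q' hq'
    refine ⟨rkF M w (q', k + 1), ?_, ⟨hq', rfl⟩⟩
    rw [Fin.le_def, hrk_eq]
    have hedge : Edge M w (qi.1, k) (q', k + 1) := ⟨rfl, hq'⟩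
    exact le_trans (KVrank_edge M w hR hI.1 hedge) hI.2.1
  have hinv : ∀ qi k, IC M w qi k → ∀ qi' ∈ σC M w qi k, IC M w qi' (k + 1) := by
    intro qi k hI qi' hqi'
    obtain ⟨hmem, hrk⟩ := hqi'
    have hedge : Edge M w (qi.1, k) (qi'.1, k + 1) := ⟨rfl, hmem⟩
    have hHH : ((qi'.1, k + 1) : Pos M) ∈ HH M w := Edge_HH M w hI.1 hedge
    refine ⟨hHH, ?_, ?_⟩
    · rw [hrk, hrk_eq]
    · intro hodd
      rw [hrk, hrk_eq] at hodd
      exact KVrank_odd_not_F M w hR hHH hodd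
  refine ⟨ABAaux.strategyRun (complA M) (σC M w) w (IC M w) h0 hsat hinv, ?_⟩
  intro f hf0 hf N
  obtain ⟨g, hg, hg0, hgpath⟩ := ABAaux.strategyRun_branch (complA M) (σC M w) w
    (IC M w) h0 hsat hinv f hf0 hf
  -- the ranks along the branch
  set rk : ℕ → ℕ := fun k => KVrank M w ((g k).1, k) with hrkdef
  have hHHg : ∀ k, (((g k).1, k) : Pos M) ∈ HH M w := fun k => ((hgpath k).1).1
  have hedgeg : ∀ k, Edge M w ((g k).1, k) ((g (k + 1)).1, k + 1) :=
    fun k => ⟨rfl, ((hgpath k).2).1⟩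
  have hanti : ∀ k, rk (k + 1) ≤ rk k := fun k =>
    KVrank_edge M w hR (hHHg k) (hedgeg k)
  have hanti' : ∀ a b, a ≤ b → rk b ≤ rk a := by
    intro a b hab
    induction hab with
    | refl => exact le_refl _
    | step h ih => exact le_trans (hanti _) ih
  -- eventually constant
  obtain ⟨K, hK⟩ : ∃ K, rk K = sInf (Set.range rk) :=
    Nat.sInf_mem (Set.range_nonempty rk)
  have hconst : ∀ k, K ≤ k → rk k = rk K := by
    intro k hk
    refine le_antisymm (hanti' K k hk) ?_
    rw [hK]
    exact Nat.sInf_le ⟨k, rfl⟩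
  -- the eventual rank is odd
  have hodd : ¬ Even (rk K) := by
    intro heven
    exact KVrank_no_constant_even M w hR (fun j => (g (K + j)).1) K
      (fun j => hHHg (K + j))
      (fun j => hedgeg (K + j))
      (i := rk K)
      (fun j => hconst (K + j) (Nat.le_add_right K j)) heven
  -- the second component equals the rank from step 1 on
  have hsnd : ∀ k, (((g (k + 1)).2 : ℕ)) = rk (k + 1) := by
    intro k
    have := ((hgpath k).2).2
    rw [this, hrk_eq]
  refine ⟨max N (K + 1), le_max_left _ _, ?_⟩
  rw [hg (max N (K + 1))]
  show ¬ Even (((g (max N (K + 1))).2 : ℕ))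
  obtain ⟨k', hk'⟩ : ∃ k', max N (K + 1) = k' + 1 :=
    ⟨max N (K + 1) - 1, by omega⟩
  rw [hk', hsnd k', hconst (k' + 1) (by omega)]
  exact hodd

theorem not_accept_of_compl (hc : w ∈ (complA M).Lang) : w ∉ M.Lang := by
  obtain ⟨ρ', hρ'⟩ := hc
  rintro ⟨ρ, hρ⟩
  -- joint branches
  set inv : ℕ → List ℕ × List ℕ → Prop := fun k ts =>
    ts.1 ∈ ρ'.T ∧ ts.2 ∈ ρ.T ∧ ts.1.length = k ∧ ts.2.length = k ∧
      (ρ'.r ts.1).1 = ρ.r ts.2 with hinvdef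
  have inv0 : inv 0 ([], []) := by
    refine ⟨ρ'.root_mem, ρ.root_mem, rfl, rfl, ?_⟩
    rw [ρ'.root_label, ρ.root_label]
    rfl
  have step : ∀ k (ts : List ℕ × List ℕ), inv k ts → ∃ ts' : List ℕ × List ℕ,
      inv (k + 1) ts' ∧ (∃ m', ts'.1 = ts.1 ++ [m']) ∧ (∃ m, ts'.2 = ts.2 ++ [m]) ∧
      (((ρ'.r ts'.1).2 : ℕ)) ≤ (((ρ'.r ts.1).2 : ℕ)) := by
    rintro k ⟨t, s⟩ ⟨ht, hs, hlt, hls, hlab⟩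
    have htr' := ρ'.trans t ht
    have htr := ρ.trans s hs
    by_cases hguard : (ρ'.r t).1 ∈ M.F ∧ ¬ Even (((ρ'.r t).2 : ℕ))
    · rw [complA_δ_ff M hguard.1 hguard.2] at htr'
      exact absurd htr' (by simp [PosBool.Sat])
    · rw [complA_δ_rel M hguard] at htr'
      have hdown := sat_release_down htr'
      rw [hlab] at hdown
      rw [hlt] at htr'
      rw [hls] at htr
      rw [hlt] at hdown
      have hjoint := exists_mem_inter htr hdown
      obtain ⟨q', hq'v, hq'd⟩ := hjoint
      obtain ⟨j, hj, m', hm', hr'⟩ := hq'd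
      obtain ⟨m, hm, hrm⟩ := hq'v
      refine ⟨(t ++ [m'], s ++ [m]), ⟨hm', hm, by simp [hlt], by simp [hls], ?_⟩,
        ⟨m', rfl⟩, ⟨m, rfl⟩, ?_⟩
      · rw [hr', hrm]
      · rw [hr']
        exact hj
  -- build the joint sequence
  let seq : ∀ k : ℕ, {ts : List ℕ × List ℕ // inv k ts} := fun k =>
    Nat.rec ⟨([], []), inv0⟩
      (fun k ih => ⟨(step k ih.1 ih.2).choose, (step k ih.1 ih.2).choose_spec.1⟩) k
  have hseqsucc : ∀ k, (seq (k + 1)).1 = (step k (seq k).1 (seq k).2).choose := fun k => rfl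
  have hrel : ∀ k, (∃ m', (seq (k + 1)).1.1 = (seq k).1.1 ++ [m']) ∧
      (∃ m, (seq (k + 1)).1.2 = (seq k).1.2 ++ [m]) ∧
      (((ρ'.r (seq (k + 1)).1.1).2 : ℕ)) ≤ (((ρ'.r (seq k).1.1).2 : ℕ)) := by
    intro k
    have h := (step k (seq k).1 (seq k).2).choose_spec
    rw [← hseqsucc k] at h
    exact ⟨h.2.1, h.2.2.1, h.2.2.2⟩
  have hinvk : ∀ k, inv k (seq k).1 := fun k => (seq k).2
  -- the branch of ρ'
  set ik : ℕ → ℕ := fun k => ((ρ'.r (seq k).1.1).2 : ℕ) with hikdef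
  have hanti' : ∀ a b, a ≤ b → ik b ≤ ik a := by
    intro a b hab
    induction hab with
    | refl => exact le_refl _
    | step h ih => exact le_trans ((hrel _).2.2) ih
  obtain ⟨K, hK⟩ : ∃ K, ik K = sInf (Set.range ik) :=
    Nat.sInf_mem (Set.range_nonempty ik)
  have hconst : ∀ k, K ≤ k → ik k = ik K := by
    intro k hk
    refine le_antisymm (hanti' K k hk) ?_
    rw [hK]
    exact Nat.sInf_le ⟨k, rfl⟩
  have hbranch' : ∀ N, ∃ k ≥ N, ρ'.r ((seq k).1.1) ∈ (complA M).F := by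
    apply hρ' (fun k => (seq k).1.1) rfl
    intro k
    exact ⟨(hinvk k).1, (hrel k).1⟩
  have hoddK : ¬ Even (ik K) := by
    obtain ⟨k, hkK, hkF⟩ := hbranch' K
    have : ¬ Even (ik k) := hkF
    rw [hconst k hkK] at this
    exact this
  -- the branch of ρ visits F infinitely often
  obtain ⟨k, hkK, hkF⟩ := hρ (fun k => (seq k).1.2) rfl
    (fun k => ⟨(hinvk k).2.1, (hrel k).2.1⟩) K
  -- contradiction via the falsity guard
  have hlab := (hinvk k).2.2.2.2
  have hguard : (ρ'.r (seq k).1.1).1 ∈ M.F ∧ ¬ Even (((ρ'.r (seq k).1.1).2 : ℕ)) := by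
    constructor
    · rw [hlab]; exact hkF
    · show ¬ Even (ik k)
      rw [hconst k hkK]
      exact hoddK
  have htr' := ρ'.trans ((seq k).1.1) ((hinvk k).1)
  rw [complA_δ_ff M hguard.1 hguard.2] at htr'
  exact absurd htr' (by simp [PosBool.Sat])

end ABACompl

/-- **Complementation of alternating Büchi automata** with quadratic blow-up:
there is a constant `c` such that every ABA `M` with `n` states has an ABA `M'` with
at most `c * n ^ 2` states recognising the complement language. -/
theorem aba_complementation : ∃ c : ℕ, ∀ (A : Type) (M : ABA A),
    ∃ M' : ABA A, (@Fintype.card M'.Q M'.fin) ≤ c * (@Fintype.card M.Q M.fin) ^ 2 ∧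
      M'.Lang = M.Langᶜ := by
  refine ⟨3, fun A M => ⟨ABACompl.complA M, ?_, ?_⟩⟩
  · have hcard : (@Fintype.card (ABACompl.complA M).Q (ABACompl.complA M).fin) =
        (@Fintype.card M.Q M.fin) * (2 * ABACompl.n M + 1) := by
      have h1 : (@Fintype.card (ABACompl.complA M).Q (ABACompl.complA M).fin) =
          @Fintype.card (M.Q × Fin (2 * ABACompl.n M + 1))
            (@instFintypeProd _ _ M.fin (Fin.fintype _)) := rfl
      rw [h1, @Fintype.card_prod M.Q (Fin (2 * ABACompl.n M + 1)) M.fin (Fin.fintype _),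
        Fintype.card_fin]
    rw [hcard]
    have hn : ABACompl.n M = @Fintype.card M.Q M.fin := rfl
    have hpos : 1 ≤ @Fintype.card M.Q M.fin :=
      @Fintype.card_pos M.Q M.fin ⟨M.q0⟩
    rw [hn]
    set m := @Fintype.card M.Q M.fin
    nlinarith
  · ext w
    simp only [Set.mem_compl_iff]
    constructor
    · intro hw
      exact ABACompl.not_accept_of_compl M w hw
    · intro hw
      have hR : ((M.q0, 0) : ABAGame.Pos M) ∈ ABAGame.R M w := by
        by_contra h
        exact hw (ABAGame.accept_of_not_R M w h)
      exact ABACompl.compl_accepts M w hR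
end
end

section
/- Every ω-regular language L over a finite alphabet Σ can be written as a finite union L = ⋃_{i=1}^{k} L_{i,0} · (L_{i,1})^ω where each L_{i,0} and L_{i,1} is a regular language of finite words over Σ. -/
/-- A nondeterministic Büchi automaton. -/
structure NBA (A : Type) where
  Q : Type
  fin : Fintype Q
  q0 : Q
  δ : Q → A → Set Q
  F : Set Q

/-- The ω-language of an NBA: words having a run visiting `F` infinitely often. -/
def NBA.Lang {A : Type} (M : NBA A) : Set (ℕ → A) :=
  {w | ∃ r : ℕ → M.Q, r 0 = M.q0 ∧ (∀ k, r (k + 1) ∈ M.δ (r k) (w k)) ∧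
    ∀ N, ∃ k ≥ N, r k ∈ M.F}

/-- The finite word consisting of the first `m` letters of `w`. -/
def prefixWord {A : Type} (w : ℕ → A) (m : ℕ) : List A := List.ofFn (fun j : Fin m => w j)

/-- Concatenation of a language of finite words with a set of infinite words. -/
def OmegaConcat {A : Type} (U : Language A) (V : Set (ℕ → A)) : Set (ℕ → A) :=
  {w | ∃ m, prefixWord w m ∈ U ∧ (fun k => w (k + m)) ∈ V}

/-- `U^ω`: infinite words decomposing into infinitely many nonempty finite blocks from `U`. -/
def OmegaPow {A : Type} (U : Language A) : Set (ℕ → A) :=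
  {w | ∃ k : ℕ → ℕ, k 0 = 0 ∧ StrictMono k ∧
    ∀ i, (List.ofFn (fun j : Fin (k (i + 1) - k i) => w (k i + j))) ∈ U}

def NBA.toNFA {A : Type} (M : NBA A) (p : M.Q) (T : Set M.Q) : NFA A M.Q :=
  ⟨M.δ, {p}, T⟩

def Wlang {A : Type} (M : NBA A) (p : M.Q) (T : Set M.Q) : Language A :=
  (M.toNFA p T).accepts

lemma Wlang_isRegular {A : Type} (M : NBA A) (p : M.Q) (T : Set M.Q) :
    (Wlang M p T).IsRegular := by
  haveI := M.fin
  exact ⟨Set M.Q, inferInstance, (M.toNFA p T).toDFA, (M.toNFA p T).toDFA_correct⟩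

lemma mem_evalFrom_iff' {A σ : Type*} (N : NFA A σ) (S : Set σ) (l : List A) (q : σ) :
    q ∈ N.evalFrom S l ↔ ∃ p ∈ S, q ∈ N.evalFrom {p} l := by
  induction l generalizing S with
  | nil => simp
  | cons a l ih =>
    show q ∈ N.evalFrom (N.stepSet S a) l ↔ _
    rw [ih]
    constructor
    · rintro ⟨p', hp', hq⟩
      rw [NFA.mem_stepSet] at hp'
      obtain ⟨p, hp, hstep⟩ := hp'
      refine ⟨p, hp, ?_⟩
      show q ∈ N.evalFrom (N.stepSet {p} a) l
      rw [ih]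
      exact ⟨p', by rw [NFA.mem_stepSet]; exact ⟨p, rfl, hstep⟩, hq⟩
    · rintro ⟨p, hp, hq⟩
      have : q ∈ N.evalFrom (N.stepSet {p} a) l := hq
      rw [ih] at this
      obtain ⟨p', hp', hq'⟩ := this
      rw [NFA.mem_stepSet] at hp'
      obtain ⟨t, ht, hstep⟩ := hp'
      cases ht
      exact ⟨p', by rw [NFA.mem_stepSet]; exact ⟨p, hp, hstep⟩, hq'⟩

lemma mem_evalFrom_singleton_iff {A σ : Type*} (N : NFA A σ) (p q : σ) (l : List A) :
    q ∈ N.evalFrom {p} l ↔ ∃ r : ℕ → σ, r 0 = p ∧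
      (∀ i, (h : i < l.length) → r (i + 1) ∈ N.step (r i) l[i]) ∧ r l.length = q := by
  induction l generalizing p with
  | nil =>
    simp only [NFA.evalFrom_nil, Set.mem_singleton_iff, List.length_nil]
    constructor
    · rintro rfl; exact ⟨fun _ => q, rfl, by omega, rfl⟩
    · rintro ⟨r, h0, _, hn⟩; rw [← h0, hn]
  | cons a l ih =>
    have hcons : q ∈ N.evalFrom {p} (a :: l) ↔ ∃ p' ∈ N.step p a, q ∈ N.evalFrom {p'} l := by
      show q ∈ N.evalFrom (N.stepSet {p} a) l ↔ _
      rw [mem_evalFrom_iff']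
      simp [NFA.mem_stepSet]
    rw [hcons]
    constructor
    · rintro ⟨p', hstep, hq⟩
      rw [ih] at hq
      obtain ⟨r, h0, hst, hn⟩ := hq
      refine ⟨fun n => Nat.rec p (fun i _ => r i) n, rfl, ?_, hn⟩
      intro i hi
      cases i with
      | zero => simpa [h0] using hstep
      | succ i =>
        have := hst i (by simpa using hi)
        simpa using this
    · rintro ⟨r, h0, hst, hn⟩
      refine ⟨r 1, by rw [← h0]; exact hst 0 (by simp), ?_⟩
      rw [ih]
      refine ⟨fun n => r (n + 1), rfl, ?_, by simpa using hn⟩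
      intro i hi
      have := hst (i + 1) (by simpa using Nat.succ_lt_succ hi)
      simpa using this

lemma mem_Wlang_iff {A : Type} (M : NBA A) (p : M.Q) (T : Set M.Q) (u : ℕ → A) (n : ℕ) :
    (List.ofFn fun j : Fin n => u j) ∈ Wlang M p T ↔
      ∃ r : ℕ → M.Q, r 0 = p ∧ (∀ i < n, r (i + 1) ∈ M.δ (r i) (u i)) ∧ r n ∈ T := by
  rw [Wlang, NFA.mem_accepts]
  constructor
  · rintro ⟨q, hq, hqe⟩
    have : q ∈ (M.toNFA p T).evalFrom {p} (List.ofFn fun j : Fin n => u j) := hqe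
    rw [mem_evalFrom_singleton_iff] at this
    obtain ⟨r, h0, hst, hn⟩ := this
    refine ⟨r, h0, ?_, ?_⟩
    · intro i hi
      have := hst i (by simpa using hi)
      simpa [NBA.toNFA, List.getElem_ofFn] using this
    · rw [show r n = q by simpa using hn]; exact hq
  · rintro ⟨r, h0, hst, hn⟩
    refine ⟨r n, hn, ?_⟩
    show r n ∈ (M.toNFA p T).evalFrom {p} _
    rw [mem_evalFrom_singleton_iff]
    refine ⟨r, h0, ?_, by simp⟩
    intro i hi
    have hi' : i < n := by simpa using hi
    have := hst i hi'
    simpa [NBA.toNFA, List.getElem_ofFn] using this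

/-- For strictly monotone `f` with `f 0 ≤ n`, there is `i` with `f i ≤ n < f (i+1)`. -/
lemma exists_block (f : ℕ → ℕ) (hf : StrictMono f) (n : ℕ) (h : f 0 ≤ n) :
    ∃ i, f i ≤ n ∧ n < f (i + 1) := by
  classical
  have hex : ∃ i, n < f (i + 1) := ⟨n, lt_of_lt_of_le (Nat.lt_succ_self n) hf.le_apply⟩
  refine ⟨Nat.find hex, ?_, Nat.find_spec hex⟩
  rcases Nat.eq_zero_or_pos (Nat.find hex) with h0 | h0
  · rw [h0]; exact h
  · obtain ⟨j, hj⟩ := Nat.exists_eq_add_of_lt h0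
    have := Nat.find_min hex (m := j) (by omega)
    have : f (j + 1) ≤ n := by omega
    calc f (Nat.find hex) = f (j + 1) := by rw [hj]; ring_nf
    _ ≤ n := this

lemma block_unique (f : ℕ → ℕ) (hf : StrictMono f) {i i' n : ℕ}
    (h1 : f i ≤ n) (h2 : n < f (i + 1)) (h3 : f i' ≤ n) (h4 : n < f (i' + 1)) : i = i' := by
  rcases lt_trichotomy i i' with hl | he | hl
  · have : f (i + 1) ≤ f i' := hf.le_iff_le.mpr (by omega)
    omega
  · exact he
  · have : f (i' + 1) ≤ f i := hf.le_iff_le.mpr (by omega)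
    omega

/-- **Büchi's decomposition theorem**: every ω-regular language (one accepted by a
nondeterministic Büchi automaton) over a finite alphabet is a finite union
`⋃ i, L_{i,0} · (L_{i,1})^ω` of concatenations of regular languages of finite words
with ω-powers of regular languages of finite words. -/
theorem omega_regular_decomposition {A : Type} [Fintype A] (L : Set (ℕ → A))
    (h : ∃ M : NBA A, M.Lang = L) :
    ∃ (k : ℕ) (U V : Fin k → Language A),
      (∀ i, (U i).IsRegular ∧ (V i).IsRegular) ∧
      L = ⋃ i, OmegaConcat (U i) (OmegaPow (V i)) := by
  classical
  obtain ⟨M, rfl⟩ := h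
  haveI := M.fin
  set e : Fin (Fintype.card M.Q) ≃ M.Q := (Fintype.equivFin M.Q).symm with he
  refine ⟨Fintype.card M.Q,
    fun i => Wlang M M.q0 {e i},
    fun i => Wlang M (e i) {q' | q' = e i ∧ e i ∈ M.F},
    fun i => ⟨Wlang_isRegular _ _ _, Wlang_isRegular _ _ _⟩, ?_⟩
  ext w
  simp only [Set.mem_iUnion]
  constructor
  · -- forward direction
    rintro ⟨r, h0, hstep, hinf⟩
    -- the set of visiting times of F is infinite
    have hSinf : {n | r n ∈ M.F}.Infinite := by
      refine Set.infinite_of_not_bddAbove ?_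
      rintro ⟨b, hb⟩
      obtain ⟨k, hk, hkF⟩ := hinf (b + 1)
      have := hb hkF
      omega
    -- pigeonhole: some state q ∈ F is visited infinitely often
    haveI : Infinite {n // r n ∈ M.F} := hSinf.to_subtype
    obtain ⟨q, hq⟩ := Finite.exists_infinite_fiber
      (α := {n // r n ∈ M.F}) (fun x => r x.1)
    have hqP : ((fun x : {n // r n ∈ M.F} => r x.1) ⁻¹' {q}).Infinite :=
      Set.infinite_coe_iff.mp hq
    obtain ⟨x0, hx0⟩ := hqP.nonempty
    have hqF : q ∈ M.F := by
      have : r x0.1 = q := hx0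
      rw [← this]; exact x0.2
    have hqinf : {n | r n = q}.Infinite := by
      have himg : (Subtype.val '' ((fun x : {n // r n ∈ M.F} => r x.1) ⁻¹' {q})).Infinite :=
        hqP.image (Set.injOn_of_injective Subtype.val_injective)
      refine himg.mono ?_
      rintro n ⟨x, hx, rfl⟩
      exact hx
    set t : ℕ → ℕ := Nat.nth (fun n => r n = q) with ht
    have htmono : StrictMono t := Nat.nth_strictMono hqinf
    have htq : ∀ n, r (t n) = q := fun n => Nat.nth_mem_of_infinite hqinf n
    refine ⟨e.symm q, t 0, ?_, ?_⟩
    · -- prefix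
      rw [Equiv.apply_symm_apply]
      exact (mem_Wlang_iff M M.q0 {q} w (t 0)).mpr
        ⟨r, h0, fun i _ => hstep i, by simp [htq 0]⟩
    · -- omega power part
      rw [Equiv.apply_symm_apply]
      refine ⟨fun n => t n - t 0, by simp, ?_, ?_⟩
      · intro a b hab
        have h1 := htmono hab
        have h2 := htmono.monotone (Nat.zero_le a)
        simp only []
        omega
      · intro i
        have h0i : t 0 ≤ t i := htmono.monotone (Nat.zero_le i)
        have h0i1 : t 0 ≤ t (i + 1) := htmono.monotone (Nat.zero_le (i + 1))
        have hii : t i < t (i + 1) := htmono (Nat.lt_succ_self i)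
        have hlist : (List.ofFn fun j : Fin (t (i + 1) - t 0 - (t i - t 0)) =>
              w (t i - t 0 + ↑j + t 0)) =
            List.ofFn fun j : Fin (t (i + 1) - t i) => w (t i + ↑j) := by
          apply List.ext_getElem (by simp; omega)
          intro n h1 h2
          simp only [List.getElem_ofFn]
          congr 1
          omega
        show (List.ofFn fun j : Fin (t (i + 1) - t 0 - (t i - t 0)) =>
              w (t i - t 0 + ↑j + t 0)) ∈ Wlang M q {q' | q' = q ∧ q ∈ M.F}
        rw [hlist]
        refine (mem_Wlang_iff M q {q' | q' = q ∧ q ∈ M.F}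
          (fun x => w (t i + x)) (t (i + 1) - t i)).mpr
          ⟨fun x => r (t i + x), by simpa using htq i, ?_, ?_⟩
        · intro x _
          show r (t i + (x + 1)) ∈ M.δ (r (t i + x)) (w (t i + x))
          rw [show t i + (x + 1) = t i + x + 1 by omega]
          exact hstep (t i + x)
        · show r (t i + (t (i + 1) - t i)) ∈ {q' | q' = q ∧ q ∈ M.F}
          rw [show t i + (t (i + 1) - t i) = t (i + 1) by omega]
          exact ⟨htq (i + 1), hqF⟩
  · -- backward direction
    rintro ⟨i, m, hpre, kseq, hk0, hkmono, hblocks⟩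
    obtain ⟨r0, hr00, hr0s, hr0m⟩ := (mem_Wlang_iff M M.q0 {e i} w m).mp hpre
    have hr0m' : r0 m = e i := hr0m
    have hb : ∀ j, ∃ rr : ℕ → M.Q, rr 0 = e i ∧
        (∀ x < kseq (j + 1) - kseq j, rr (x + 1) ∈ M.δ (rr x) (w (kseq j + x + m))) ∧
        rr (kseq (j + 1) - kseq j) = e i ∧ e i ∈ M.F := by
      intro j
      obtain ⟨rr, a, b, c⟩ := (mem_Wlang_iff M (e i) {q' | q' = e i ∧ e i ∈ M.F}
        (fun x => w (kseq j + x + m)) (kseq (j + 1) - kseq j)).mp (hblocks j)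
      exact ⟨rr, a, b, c⟩
    choose rs hrs0 hrss hrse using hb
    have hF : e i ∈ M.F := (hrse 0).2
    have hrsend : ∀ j, rs j (kseq (j + 1) - kseq j) = e i := fun j => (hrse j).1
    choose idx hidx using fun j : ℕ => exists_block kseq hkmono j (by omega)
    set R : ℕ → M.Q := fun n =>
      if n < m then r0 n else rs (idx (n - m)) ((n - m) - kseq (idx (n - m))) with hRdef
    have hRblock : ∀ j x, kseq j ≤ x → x ≤ kseq (j + 1) → R (m + x) = rs j (x - kseq j) := by
      intro j x h1 h2
      have hnm : ¬(m + x < m) := by omega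
      have hsub : m + x - m = x := by omega
      show (if m + x < m then r0 (m + x)
          else rs (idx (m + x - m)) ((m + x - m) - kseq (idx (m + x - m)))) = _
      rw [if_neg hnm, hsub]
      rcases eq_or_lt_of_le h2 with heq | hlt
      · have hup : x < kseq (j + 2) := by
          have := hkmono (show j + 1 < j + 2 by omega); omega
        have hxi : idx x = j + 1 :=
          block_unique kseq hkmono (hidx x).1 (hidx x).2 (le_of_eq heq.symm) hup
        rw [hxi, show x - kseq (j + 1) = 0 by omega, hrs0,
          show x - kseq j = kseq (j + 1) - kseq j by omega]
        exact (hrsend j).symm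
      · have hxi : idx x = j := block_unique kseq hkmono (hidx x).1 (hidx x).2 h1 hlt
        rw [hxi]
    have hRpre : ∀ n ≤ m, R n = r0 n := by
      intro n hn
      rcases lt_or_eq_of_le hn with hlt | rfl
      · show (if n < m then _ else _) = _
        rw [if_pos hlt]
      · have h1 := hRblock 0 0 (by omega) (by have := hkmono Nat.zero_lt_one; omega)
        have h2 : R n = rs 0 0 := by simpa [hk0] using h1
        rw [h2, hrs0 0, hr0m']
    refine ⟨R, ?_, ?_, ?_⟩
    · rw [hRpre 0 (Nat.zero_le m), hr00]
    · intro n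
      rcases lt_or_ge (n + 1) (m + 1) with hlt | hge
      · rw [hRpre n (by omega), hRpre (n + 1) (by omega)]
        exact hr0s n (by omega)
      · have hx : n = m + (n - m) := by omega
        set x := n - m with hxdef
        obtain ⟨h1, h2⟩ := hidx x
        have e1 : R n = rs (idx x) (x - kseq (idx x)) := by
          rw [hx]; exact hRblock (idx x) x h1 (le_of_lt h2)
        have e2 : R (n + 1) = rs (idx x) (x + 1 - kseq (idx x)) := by
          rw [show n + 1 = m + (x + 1) by omega]
          exact hRblock (idx x) (x + 1) (by omega) (by omega)
        have hstep' := hrss (idx x) (x - kseq (idx x)) (by omega)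
        rw [show kseq (idx x) + (x - kseq (idx x)) + m = n by omega] at hstep'
        rw [e1, e2, show x + 1 - kseq (idx x) = x - kseq (idx x) + 1 by omega]
        exact hstep'
    · intro N
      have hN : N ≤ kseq N := hkmono.le_apply
      refine ⟨m + kseq N, by omega, ?_⟩
      have := hRblock N (kseq N) le_rfl (le_of_lt (hkmono (Nat.lt_succ_self N)))
      rw [this, Nat.sub_self, hrs0]
      exact hF
end

section
/- For programs α and path assignments Π with ν(Π) = (s₀τ₁)(s₂τ₃)… the following equivalence holds: (Π, i, k) ∈ R(α) if and only if there exist a state sequence q₀, q₁, …, q_m in M_α with m = (k−i)/2 and sets of formulas X₀, …, X_m such that (i) q₀ is the initial state of M_α; (ii) q_m ⇒ᵉ_{X_m} q_f for the final state q_f; (iii) q_l ⇒^{τ_{i+2l+1}}_{X_l} q_{l+1} for all l < m; and (iv) ψ ∈ X_l implies Π[i+2l, ∞] ⊨_T ψ for all l ≤ m. -/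
/-- Programs of HyperPDL-Δ: regular expressions over tuples of atomic programs
(with `none` as the wildcard `·`) and tests drawn from a type `F` of formulas. -/
inductive Prog (P : Type) (F : Type) (n : ℕ) where
  | atom (t : Fin n → Option P) : Prog P F n
  | eps : Prog P F n
  | sum (a b : Prog P F n) : Prog P F n
  | seq (a b : Prog P F n) : Prog P F n
  | star (a : Prog P F n) : Prog P F n
  | test (ψ : F) : Prog P F n

/-- The size of a program: the number of operators and atomic symbols. -/
def Prog.size {P F : Type} {n : ℕ} : Prog P F n → ℕ
  | .atom _ => 1
  | .eps => 1
  | .sum a b => a.size + b.size + 1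
  | .seq a b => a.size + b.size + 1
  | .star a => a.size + 1
  | .test _ => 1

/-- The state space of the intermediate automaton `M_α`:
`τ` and `ε` contribute 2 states, a sum adds 2 fresh states to the disjoint union,
a concatenation is the disjoint union, a star adds 2 fresh states, a test has 3 states. -/
def Prog.St {P F : Type} {n : ℕ} : Prog P F n → Type
  | .atom _ => Fin 2
  | .eps => Fin 2
  | .sum a b => (a.St ⊕ b.St) ⊕ Fin 2
  | .seq a b => a.St ⊕ b.St
  | .star a => a.St ⊕ Fin 2
  | .test _ => Fin 3

/-- The initial state of `M_α`. -/
def Prog.q0 {P F : Type} {n : ℕ} : (α : Prog P F n) → α.St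
  | .atom _ => (0 : Fin 2)
  | .eps => (0 : Fin 2)
  | .sum _ _ => .inr 0
  | .seq a _ => .inl a.q0
  | .star _ => .inr 0
  | .test _ => (0 : Fin 3)

/-- The final state of `M_α`. -/
def Prog.qf {P F : Type} {n : ℕ} : (α : Prog P F n) → α.St
  | .atom _ => (1 : Fin 2)
  | .eps => (1 : Fin 2)
  | .sum _ _ => .inr 1
  | .seq _ b => .inr b.qf
  | .star _ => .inr 1
  | .test _ => (2 : Fin 3)

/-- The letter-reading transitions of `M_α` over the alphabet `Σⁿ`. -/
def Prog.ρ {P F : Type} {n : ℕ} : (α : Prog P F n) → α.St → (Fin n → P) → Set α.St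
  | .atom t, q, a => {q' | q = (0 : Fin 2) ∧ q' = (1 : Fin 2) ∧ ∀ l, t l = none ∨ t l = some (a l)}
  | .eps, _, _ => ∅
  | .sum c d, q, a =>
    match q with
    | .inl (.inl q) => (fun x => Sum.inl (Sum.inl x)) '' c.ρ q a
    | .inl (.inr q) => (fun x => Sum.inl (Sum.inr x)) '' d.ρ q a
    | .inr _ => ∅
  | .seq c d, q, a =>
    match q with
    | .inl q => Sum.inl '' c.ρ q a
    | .inr q => Sum.inr '' d.ρ q a
  | .star c, q, a =>
    match q with
    | .inl q => Sum.inl '' c.ρ q a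
    | .inr _ => ∅
  | .test _, _, _ => ∅

/-- The ε-transitions of `M_α` (including the backwards edges of star constructions). -/
def Prog.ρε {P F : Type} {n : ℕ} : (α : Prog P F n) → α.St → Set α.St
  | .atom _, _ => ∅
  | .eps, q => {q' | q = (0 : Fin 2) ∧ q' = (1 : Fin 2)}
  | .sum c d, q =>
    match q with
    | .inl (.inl q) => (fun x => Sum.inl (Sum.inl x)) '' c.ρε q ∪ {x | q = c.qf ∧ x = .inr 1}
    | .inl (.inr q) => (fun x => Sum.inl (Sum.inr x)) '' d.ρε q ∪ {x | q = d.qf ∧ x = .inr 1}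
    | .inr i => {x | i = 0 ∧ (x = .inl (.inl c.q0) ∨ x = .inl (.inr d.q0))}
  | .seq c d, q =>
    match q with
    | .inl q => Sum.inl '' c.ρε q ∪ {x | q = c.qf ∧ x = .inr d.q0}
    | .inr q => Sum.inr '' d.ρε q
  | .star c, q =>
    match q with
    | .inl q => Sum.inl '' c.ρε q ∪ {x | q = c.qf ∧ x = .inr 1}
    | .inr i => {x | (i = 0 ∧ (x = .inl c.q0 ∨ x = .inr 1)) ∨ (i = 1 ∧ x = .inr 0)}
  | .test _, q => {q' | (q = (0 : Fin 3) ∧ q' = (1 : Fin 3)) ∨ (q = (1 : Fin 3) ∧ q' = (2 : Fin 3))}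

/-- The ε-transitions of `M_α` with all backwards edges of star constructions removed. -/
def Prog.ρεNB {P F : Type} {n : ℕ} : (α : Prog P F n) → α.St → Set α.St
  | .atom _, _ => ∅
  | .eps, q => {q' | q = (0 : Fin 2) ∧ q' = (1 : Fin 2)}
  | .sum c d, q =>
    match q with
    | .inl (.inl q) => (fun x => Sum.inl (Sum.inl x)) '' c.ρεNB q ∪ {x | q = c.qf ∧ x = .inr 1}
    | .inl (.inr q) => (fun x => Sum.inl (Sum.inr x)) '' d.ρεNB q ∪ {x | q = d.qf ∧ x = .inr 1}
    | .inr i => {x | i = 0 ∧ (x = .inl (.inl c.q0) ∨ x = .inl (.inr d.q0))}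
  | .seq c d, q =>
    match q with
    | .inl q => Sum.inl '' c.ρεNB q ∪ {x | q = c.qf ∧ x = .inr d.q0}
    | .inr q => Sum.inr '' d.ρεNB q
  | .star c, q =>
    match q with
    | .inl q => Sum.inl '' c.ρεNB q ∪ {x | q = c.qf ∧ x = .inr 1}
    | .inr i => {x | i = 0 ∧ (x = .inl c.q0 ∨ x = .inr 1)}
  | .test _, q => {q' | (q = (0 : Fin 3) ∧ q' = (1 : Fin 3)) ∨ (q = (1 : Fin 3) ∧ q' = (2 : Fin 3))}

/-- The state-marking function `Ψ` of `M_α`: the middle state of each test `ψ?` is marked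
with `ψ`; all other states are unmarked. -/
def Prog.mark {P F : Type} {n : ℕ} : (α : Prog P F n) → α.St → Set F
  | .atom _, _ => ∅
  | .eps, _ => ∅
  | .sum c d, q =>
    match q with
    | .inl (.inl q) => c.mark q
    | .inl (.inr q) => d.mark q
    | .inr _ => ∅
  | .seq c d, q =>
    match q with
    | .inl q => c.mark q
    | .inr q => d.mark q
  | .star c, q =>
    match q with
    | .inl q => c.mark q
    | .inr _ => ∅
  | .test ψ, q => {x | q = (1 : Fin 3) ∧ x = ψ}

/-- The state space of `M_α` is finite. -/
def Prog.finSt {P F : Type} {n : ℕ} : (α : Prog P F n) → Fintype α.St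
  | .atom _ => inferInstanceAs (Fintype (Fin 2))
  | .eps => inferInstanceAs (Fintype (Fin 2))
  | .sum a b => letI := a.finSt; letI := b.finSt; inferInstanceAs (Fintype ((a.St ⊕ b.St) ⊕ Fin 2))
  | .seq a b => letI := a.finSt; letI := b.finSt; inferInstanceAs (Fintype (a.St ⊕ b.St))
  | .star a => letI := a.finSt; inferInstanceAs (Fintype (a.St ⊕ Fin 2))
  | .test _ => inferInstanceAs (Fintype (Fin 3))

/-- Marked ε-reachability: `EpsReach ρε Ψ q X q'` holds iff there is an ε-path from `q`
to `q'` collecting exactly the markings in `X`. -/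
inductive EpsReach {Q F : Type} (ρε : Q → Set Q) (Ψ : Q → Set F) : Q → Set F → Q → Prop
  | refl (q : Q) : EpsReach ρε Ψ q (Ψ q) q
  | step {q q' q'' : Q} {X : Set F} :
      q' ∈ ρε q → EpsReach ρε Ψ q' X q'' → EpsReach ρε Ψ q (X ∪ Ψ q) q''

/-- Marked `τ`-reachability: an ε-path collecting markings `X` followed by one letter step. -/
def TauReach {Q A F : Type} (ρ : Q → A → Set Q) (ρε : Q → Set Q) (Ψ : Q → Set F)
    (q : Q) (a : A) (X : Set F) (q'' : Q) : Prop :=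
  ∃ q', EpsReach ρε Ψ q X q' ∧ q'' ∈ ρ q' a

/-- An infinite alternating path/trace: `st j` is the element at (paper) position `2j`,
`pr j` the atomic program at (paper) position `2j+1`. -/
structure HPath (S P : Type) where
  st : ℕ → S
  pr : ℕ → P

/-- The suffix `p[2j, ∞]` of a path. -/
def HPath.drop {S P : Type} (p : HPath S P) (j : ℕ) : HPath S P :=
  ⟨fun m => p.st (j + m), fun m => p.pr (j + m)⟩

/-- The shifted path assignment `Pa[2j, ∞]`. -/
def PAdrop {S P : Type} {n : ℕ} (Pa : Fin n → HPath S P) (j : ℕ) : Fin n → HPath S P :=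
  fun l => (Pa l).drop j

/-- The program satisfaction relation `(Pa, i, k) ∈ R(α)` of HyperPDL-Δ (for even indices
`i ≤ k`), relative to a satisfaction predicate `sat` for the test formulas:
`sat ψ Pa'` means `Pa' ⊨_T ψ`. -/
def Match {S P F : Type} {n : ℕ} (sat : F → (Fin n → HPath S P) → Prop) :
    Prog P F n → (Fin n → HPath S P) → ℕ → ℕ → Prop
  | .atom t, Pa, i, k => k = i + 2 ∧ ∀ l, t l = none ∨ t l = some ((Pa l).pr (i / 2))
  | .eps, _, i, k => i = k
  | .sum a b, Pa, i, k => Match sat a Pa i k ∨ Match sat b Pa i k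
  | .seq a b, Pa, i, k => ∃ j, i ≤ j ∧ j ≤ k ∧ Match sat a Pa i j ∧ Match sat b Pa j k
  | .star a, Pa, i, k => ∃ (m : ℕ) (js : Fin (m + 1) → ℕ), js 0 = i ∧ js (Fin.last m) = k ∧
      ∀ l : Fin m, js l.castSucc ≤ js l.succ ∧ Match sat a Pa (js l.castSucc) (js l.succ)
  | .test ψ, Pa, i, k => i = k ∧ sat ψ (PAdrop Pa (i / 2))

/-- The witnessing condition of Lemma 2: a state sequence `q₀ … q_m` in `M_α` with
`m = (k - i)/2` and marking sets `X₀ … X_m` such that (i) `q₀` is initial, (ii) the last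
state ε-reaches the final state collecting `X_m`, (iii) consecutive states are
`τ`-reachable via the letters of `ν(Pa)` collecting the `X_l`, and (iv) every formula in
`X_l` holds at the corresponding suffix of `Pa`. -/
def Witness {S P F : Type} {n : ℕ} (sat : F → (Fin n → HPath S P) → Prop)
    (α : Prog P F n) (Pa : Fin n → HPath S P) (i k : ℕ) : Prop :=
  ∃ (q : Fin ((k - i) / 2 + 1) → α.St) (X : Fin ((k - i) / 2 + 1) → Set F),
    q 0 = α.q0 ∧
    EpsReach α.ρε α.mark (q (Fin.last _)) (X (Fin.last _)) α.qf ∧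
    (∀ l : Fin ((k - i) / 2),
      TauReach α.ρ α.ρε α.mark (q l.castSucc) (fun m => (Pa m).pr (i / 2 + l))
        (X l.castSucc) (q l.succ)) ∧
    (∀ l : Fin ((k - i) / 2 + 1), ∀ ψ ∈ X l, sat ψ (PAdrop Pa (i / 2 + l)))

/-!
Conditions (i)–(iii) describe a path through `M_α` that reads one letter of `ν(Π)` per step, and
(iv) says that the marks collected along it hold where they are collected. Handled one edge at a
time such paths compose freely, and cutting them at the letter edges gives back the state
sequences of the statement. The equivalence is then proved by induction on `α`: an embedded
sub-automaton is connected to the rest of `M_α` only by the ε-edges into its initial state and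
out of its final state, so a path from the initial to the final state of `M_α` splits into paths
of the components; for `α*` the back edge lets this repeat any number of times, which is the
iteration in `R(α*)`.
-/

namespace Relation

variable {α β : Type*} {r : α → α → Prop}

theorem reflTransGen_iff_exists_fin_chain {a b : α} :
    ReflTransGen r a b ↔ ∃ (m : ℕ) (f : Fin (m + 1) → α),
      f 0 = a ∧ f (Fin.last m) = b ∧ ∀ l : Fin m, r (f l.castSucc) (f l.succ) := by
  constructor
  · intro h
    induction h with
    | refl => exact ⟨0, fun _ => a, rfl, rfl, fun l => l.elim0⟩
    | @tail b c _ hbc ih =>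
        obtain ⟨m, f, h0, hlast, hf⟩ := ih
        refine ⟨m + 1, Fin.snoc f c, by simpa using h0, by simp, Fin.lastCases ?_ fun l => ?_⟩
        · simpa [hlast] using hbc
        · rw [Fin.succ_castSucc, Fin.snoc_castSucc, Fin.snoc_castSucc]
          exact hf l
  · rintro ⟨m, f, rfl, rfl, hf⟩
    have (l : Fin (m + 1)) : ReflTransGen r (f 0) (f l) :=
      Fin.induction .refl (fun l ih => ih.tail (hf l)) l
    exact this _

theorem reflTransGen_comp_iff {g : β → α} (hg : Function.Injective g)
    (hr : ∀ a b, r (g a) b → b ∈ Set.range g) {a b : β} :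
    ReflTransGen r (g a) (g b) ↔ ReflTransGen (fun x y => r (g x) (g y)) a b := by
  refine ⟨fun h => ?_, ReflTransGen.lift g (fun _ _ h => h) a b⟩
  generalize hx : g a = x at h
  induction h using ReflTransGen.head_induction_on generalizing a with
  | refl => rw [hg hx]
  | head hxy _ ih =>
      subst hx
      obtain ⟨c, rfl⟩ := hr _ _ hxy
      exact .head hxy (ih rfl)

end Relation

section MarkedRun

variable {Q A F : Type}

inductive MarkedRun (ρ : Q → A → Set Q) (ρε : Q → Set Q) (Ψ : Q → Set F)
    (holds : F → ℕ → Prop) (w : ℕ → A) : ℕ → Q → ℕ → Q → Prop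
  | nil (j q) : (∀ ψ ∈ Ψ q, holds ψ j) → MarkedRun ρ ρε Ψ holds w j q j q
  | eps {j q j' q' q''} : q' ∈ ρε q → (∀ ψ ∈ Ψ q, holds ψ j) →
      MarkedRun ρ ρε Ψ holds w j q' j' q'' → MarkedRun ρ ρε Ψ holds w j q j' q''
  | read {j q j' q' q''} : q' ∈ ρ q (w j) → (∀ ψ ∈ Ψ q, holds ψ j) →
      MarkedRun ρ ρε Ψ holds w (j + 1) q' j' q'' → MarkedRun ρ ρε Ψ holds w j q j' q''

def RunSeq (ρ : Q → A → Set Q) (ρε : Q → Set Q) (Ψ : Q → Set F)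
    (holds : F → ℕ → Prop) (w : ℕ → A) (N j : ℕ) (q qf : Q) : Prop :=
  ∃ (qs : Fin (N + 1) → Q) (X : Fin (N + 1) → Set F),
    qs 0 = q ∧
    EpsReach ρε Ψ (qs (Fin.last N)) (X (Fin.last N)) qf ∧
    (∀ l : Fin N, TauReach ρ ρε Ψ (qs l.castSucc) (w (j + l)) (X l.castSucc) (qs l.succ)) ∧
    (∀ l : Fin (N + 1), ∀ ψ ∈ X l, holds ψ (j + l))

variable {ρ : Q → A → Set Q} {ρε : Q → Set Q} {Ψ : Q → Set F} {holds : F → ℕ → Prop}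
  {w : ℕ → A}

namespace MarkedRun

lemma le {j q j' q'} (h : MarkedRun ρ ρε Ψ holds w j q j' q') : j ≤ j' := by
  induction h <;> omega

lemma trans {j q j' q' j'' q''} (h : MarkedRun ρ ρε Ψ holds w j q j' q')
    (h' : MarkedRun ρ ρε Ψ holds w j' q' j'' q'') : MarkedRun ρ ρε Ψ holds w j q j'' q'' := by
  induction h with
  | nil => exact h'
  | eps he hq _ ih => exact .eps he hq (ih h')
  | read hr hq _ ih => exact .read hr hq (ih h')

lemma holds_last {j q j' q'} (h : MarkedRun ρ ρε Ψ holds w j q j' q') :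
    ∀ ψ ∈ Ψ q', holds ψ j' := by
  induction h with
  | nil _ _ hq => exact hq
  | eps _ _ _ ih | read _ _ _ ih => exact ih

lemma map {Q' : Type} {ρ' : Q' → A → Set Q'} {ρε' : Q' → Set Q'} {Ψ' : Q' → Set F}
    (f : Q → Q') (hρ : ∀ q a, f '' ρ q a ⊆ ρ' (f q) a) (hε : ∀ q, f '' ρε q ⊆ ρε' (f q))
    (hΨ : ∀ q, Ψ' (f q) ⊆ Ψ q) {j q j' q'} (h : MarkedRun ρ ρε Ψ holds w j q j' q') :
    MarkedRun ρ' ρε' Ψ' holds w j (f q) j' (f q') := by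
  induction h with
  | nil j q hq => exact .nil j (f q) fun ψ hψ => hq ψ (hΨ q hψ)
  | eps he hq _ ih => exact .eps (hε _ ⟨_, he, rfl⟩) (fun ψ hψ => hq ψ (hΨ _ hψ)) ih
  | read hr hq _ ih => exact .read (hρ _ _ ⟨_, hr, rfl⟩) (fun ψ hψ => hq ψ (hΨ _ hψ)) ih

lemma exists_exit {Q' : Type} {ρ' : Q' → A → Set Q'} {ρε' : Q' → Set Q'} {Ψ' : Q' → Set F}
    (f : Q → Q') (qe : Q) (x₀ : Q') (hρ : ∀ q a, ρ' (f q) a ⊆ f '' ρ q a)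
    (hε : ∀ q, ρε' (f q) ⊆ f '' ρε q ∪ {x | q = qe ∧ x = x₀}) (hΨ : ∀ q, Ψ q ⊆ Ψ' (f q))
    {j q j' q''} (h : MarkedRun ρ' ρε' Ψ' holds w j (f q) j' q'') (hq'' : q'' ∉ Set.range f) :
    ∃ jm, MarkedRun ρ ρε Ψ holds w j q jm qe ∧ MarkedRun ρ' ρε' Ψ' holds w jm x₀ j' q'' := by
  generalize hq : f q = q₀ at h
  induction h generalizing q with
  | nil => exact absurd ⟨q, hq⟩ hq''
  | eps he hq₀ h ih =>
      subst hq
      rcases hε q he with ⟨y, hy, rfl⟩ | ⟨rfl, rfl⟩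
      · obtain ⟨jm, h₁, h₂⟩ := ih hq'' rfl
        exact ⟨jm, .eps hy (fun ψ hψ => hq₀ ψ (hΨ q hψ)) h₁, h₂⟩
      · exact ⟨_, .nil _ _ fun ψ hψ => hq₀ ψ (hΨ q hψ), h⟩
  | read hr hq₀ h ih =>
      subst hq
      obtain ⟨y, hy, rfl⟩ := hρ q _ hr
      obtain ⟨jm, h₁, h₂⟩ := ih hq'' rfl
      exact ⟨jm, .read hy (fun ψ hψ => hq₀ ψ (hΨ q hψ)) h₁, h₂⟩

lemma comap {Q' : Type} {ρ' : Q' → A → Set Q'} {ρε' : Q' → Set Q'} {Ψ' : Q' → Set F}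
    (f : Q → Q') (hf : Function.Injective f) (hρ : ∀ q a, ρ' (f q) a ⊆ f '' ρ q a)
    (hε : ∀ q, ρε' (f q) ⊆ f '' ρε q) (hΨ : ∀ q, Ψ q ⊆ Ψ' (f q)) {j q j' q''}
    (h : MarkedRun ρ' ρε' Ψ' holds w j (f q) j' (f q'')) : MarkedRun ρ ρε Ψ holds w j q j' q'' := by
  generalize hq : f q = q₀ at h
  generalize hq'' : f q'' = q₁ at h
  induction h generalizing q with
  | nil _ _ hq₀ =>
      subst hq
      obtain rfl := hf hq''
      exact .nil _ _ fun ψ hψ => hq₀ ψ (hΨ _ hψ)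
  | eps he hq₀ _ ih =>
      subst hq
      obtain ⟨y, hy, rfl⟩ := hε q he
      exact .eps hy (fun ψ hψ => hq₀ ψ (hΨ q hψ)) (ih rfl hq'')
  | read hr hq₀ _ ih =>
      subst hq
      obtain ⟨y, hy, rfl⟩ := hρ q _ hr
      exact .read hy (fun ψ hψ => hq₀ ψ (hΨ q hψ)) (ih rfl hq'')

end MarkedRun

lemma EpsReach.mark_subset {q X q'} (h : EpsReach ρε Ψ q X q') : Ψ q' ⊆ X := by
  induction h with
  | refl => exact subset_rfl
  | step _ _ ih => exact ih.trans Set.subset_union_left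

lemma EpsReach.markedRun_trans {j q X q' j'' q''} (h : EpsReach ρε Ψ q X q')
    (hX : ∀ ψ ∈ X, holds ψ j) (h' : MarkedRun ρ ρε Ψ holds w j q' j'' q'') :
    MarkedRun ρ ρε Ψ holds w j q j'' q'' := by
  induction h with
  | refl => exact h'
  | step he _ ih =>
      exact .eps he (fun ψ hψ => hX ψ (.inr hψ)) (ih (fun ψ hψ => hX ψ (.inl hψ)) h')

lemma markedRun_iff_epsReach {j q j' q''} : MarkedRun ρ ρε Ψ holds w j q j' q'' ↔
    ∃ X q', EpsReach ρε Ψ q X q' ∧ (∀ ψ ∈ X, holds ψ j) ∧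
      ((j' = j ∧ q' = q'') ∨ ∃ q₁ ∈ ρ q' (w j), MarkedRun ρ ρε Ψ holds w (j + 1) q₁ j' q'') := by
  constructor
  · intro h
    induction h with
    | nil j q hq => exact ⟨_, q, .refl q, hq, .inl ⟨rfl, rfl⟩⟩
    | eps he hq _ ih =>
        obtain ⟨X, q', hε, hX, hend⟩ := ih
        exact ⟨_, q', .step he hε, fun ψ hψ => hψ.elim (hX ψ) (hq ψ), hend⟩
    | @read j q _ q₁ _ hr hq h _ => exact ⟨_, q, .refl q, hq, .inr ⟨q₁, hr, h⟩⟩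
  · rintro ⟨X, q', hε, hX, ⟨rfl, rfl⟩ | ⟨q₁, hr, h⟩⟩
    · exact hε.markedRun_trans hX (.nil j' q' fun ψ hψ => hX ψ (hε.mark_subset hψ))
    · exact hε.markedRun_trans hX (.read hr (fun ψ hψ => hX ψ (hε.mark_subset hψ)) h)

lemma runSeq_succ_iff {N j : ℕ} {q qf : Q} :
    RunSeq ρ ρε Ψ holds w (N + 1) j q qf ↔ ∃ X q', TauReach ρ ρε Ψ q (w j) X q' ∧
      (∀ ψ ∈ X, holds ψ j) ∧ RunSeq ρ ρε Ψ holds w N (j + 1) q' qf := by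
  have shift {M : ℕ} (l : Fin M) : j + (l.succ : ℕ) = j + 1 + l := by
    simp only [Fin.val_succ]; omega
  constructor
  · rintro ⟨qs, X, rfl, hlast, htau, hholds⟩
    refine ⟨X 0, qs 1, htau 0, hholds 0, fun l => qs l.succ, fun l => X l.succ, rfl, hlast,
      fun l => ?_, fun l => ?_⟩
    · simpa only [shift, Fin.succ_castSucc] using htau l.succ
    · simpa only [shift] using hholds l.succ
  · rintro ⟨X₀, q', htau₀, hX₀, qs, X, rfl, hlast, htau, hholds⟩
    refine ⟨Fin.cons q qs, Fin.cons X₀ X, rfl, hlast, Fin.cases htau₀ fun l => ?_,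
      Fin.cases hX₀ fun l => ?_⟩
    · simpa only [shift, ← Fin.succ_castSucc, Fin.cons_succ] using htau l
    · simpa only [shift, Fin.cons_succ] using hholds l

lemma runSeq_iff_markedRun {N j : ℕ} {q qf : Q} :
    RunSeq ρ ρε Ψ holds w N j q qf ↔ MarkedRun ρ ρε Ψ holds w j q (j + N) qf := by
  induction N generalizing j q with
  | zero =>
      rw [markedRun_iff_epsReach]
      constructor
      · rintro ⟨qs, X, rfl, hε, -, hX⟩
        exact ⟨_, _, hε, hX (Fin.last 0), .inl ⟨rfl, rfl⟩⟩
      · rintro ⟨X, q', hε, hX, ⟨-, rfl⟩ | ⟨_, _, h⟩⟩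
        · exact ⟨fun _ => q, fun _ => X, rfl, hε, fun l => l.elim0,
            fun l => by simpa [Fin.fin_one_eq_zero l] using hX⟩
        · exact absurd h.le (by omega)
  | succ N ih =>
      rw [runSeq_succ_iff, markedRun_iff_epsReach, show j + (N + 1) = j + 1 + N by omega]
      simp only [ih, TauReach]
      constructor
      · rintro ⟨X, q', ⟨q₀, hε, hr⟩, hX, h⟩
        exact ⟨X, q₀, hε, hX, .inr ⟨q', hr, h⟩⟩
      · rintro ⟨X, q₀, hε, hX, ⟨h, -⟩ | ⟨q', hr, h⟩⟩
        · omega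
        · exact ⟨X, q', ⟨q₀, hε, hr⟩, hX, h⟩

end MarkedRun

namespace Prog

variable {S P F : Type} {n : ℕ}

abbrev Run (sat : F → (Fin n → HPath S P) → Prop) (Pa : Fin n → HPath S P) (α : Prog P F n) :
    ℕ → α.St → ℕ → α.St → Prop :=
  MarkedRun α.ρ α.ρε α.mark (fun ψ j => sat ψ (PAdrop Pa j)) (fun j m => (Pa m).pr j)

variable {sat : F → (Fin n → HPath S P) → Prop} {Pa : Fin n → HPath S P}

lemma run_atom_iff {t : Fin n → Option P} {j j' : ℕ} :
    (atom t).Run sat Pa j (atom t).q0 j' (atom t).qf ↔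
      j' = j + 1 ∧ ∀ l, t l = none ∨ t l = some ((Pa l).pr j) := by
  constructor
  · rintro (_ | ⟨⟨⟩, -, -⟩ | ⟨⟨-, rfl, hmatch⟩, -, h⟩)
    rcases h with _ | ⟨⟨⟩, -, -⟩ | ⟨⟨⟨⟩, -⟩, -, -⟩
    exact ⟨rfl, hmatch⟩
  · rintro ⟨rfl, hmatch⟩
    exact .read ⟨rfl, rfl, hmatch⟩ (fun _ => False.elim) (.nil _ _ fun _ => False.elim)

lemma run_eps_iff {j j' : ℕ} :
    (eps : Prog P F n).Run sat Pa j eps.q0 j' eps.qf ↔ j' = j := by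
  constructor
  · rintro (_ | ⟨⟨-, rfl⟩, -, h⟩ | ⟨⟨⟩, -, -⟩)
    rcases h with _ | ⟨⟨⟨⟩, -⟩, -, -⟩ | ⟨⟨⟩, -, -⟩
    rfl
  · rintro rfl
    exact .eps ⟨rfl, rfl⟩ (fun _ => False.elim) (.nil _ _ fun _ => False.elim)

lemma run_test_iff {ψ : F} {j j' : ℕ} :
    (test ψ : Prog P F n).Run sat Pa j (test ψ).q0 j' (test ψ).qf ↔
      j' = j ∧ sat ψ (PAdrop Pa j) := by
  constructor
  · rintro (_ | ⟨⟨-, rfl⟩ | ⟨⟨⟩, -⟩, -, h⟩ | ⟨⟨⟩, -, -⟩)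
    rcases h with _ | ⟨⟨⟨⟩, -⟩ | ⟨-, rfl⟩, hψ, h⟩ | ⟨⟨⟩, -, -⟩
    rcases h with _ | ⟨⟨⟨⟩, -⟩ | ⟨⟨⟩, -⟩, -, -⟩ | ⟨⟨⟩, -, -⟩
    exact ⟨rfl, hψ ψ ⟨rfl, rfl⟩⟩
  · rintro ⟨rfl, hψ⟩
    refine .eps (.inl ⟨rfl, rfl⟩) (fun _ ⟨h, _⟩ => by cases h) ?_
    refine .eps (.inr ⟨rfl, rfl⟩) (fun _ ⟨_, h⟩ => h ▸ hψ) ?_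
    exact .nil _ _ fun _ ⟨h, _⟩ => by cases h

lemma run_sum_iff {c d : Prog P F n} {j j' : ℕ} :
    (sum c d).Run sat Pa j (sum c d).q0 j' (sum c d).qf ↔
      c.Run sat Pa j c.q0 j' c.qf ∨ d.Run sat Pa j d.q0 j' d.qf := by
  constructor
  · rintro (_ | ⟨⟨-, rfl | rfl⟩, -, h⟩ | ⟨⟨⟩, -, -⟩)
    -- the final state has no outgoing edges, so the run ends where it exits the component
    · obtain ⟨jm, hc, _ | ⟨⟨⟨⟩, -⟩, -, -⟩ | ⟨⟨⟩, -, -⟩⟩ :=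
        MarkedRun.exists_exit (Q' := (sum c d).St) (fun q => .inl (.inl q)) c.qf (.inr 1)
          (fun _ _ => subset_rfl) (fun _ => subset_rfl) (fun _ => subset_rfl) h
          (by rintro ⟨_, ⟨⟩⟩)
      exact .inl hc
    · obtain ⟨jm, hd, _ | ⟨⟨⟨⟩, -⟩, -, -⟩ | ⟨⟨⟩, -, -⟩⟩ :=
        MarkedRun.exists_exit (Q' := (sum c d).St) (fun q => .inl (.inr q)) d.qf (.inr 1)
          (fun _ _ => subset_rfl) (fun _ => subset_rfl) (fun _ => subset_rfl) h
          (by rintro ⟨_, ⟨⟩⟩)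
      exact .inr hd
  · rintro (h | h)
    · have h' : (sum c d).Run sat Pa j (.inl (.inl c.q0)) j' (.inl (.inl c.qf)) :=
        h.map (Q' := (sum c d).St) (fun q => .inl (.inl q)) (fun _ _ => subset_rfl)
          (fun _ => Set.subset_union_left) (fun _ => subset_rfl)
      exact .eps ⟨rfl, .inl rfl⟩ (fun _ => False.elim)
        (h'.trans (.eps (.inr ⟨rfl, rfl⟩) h'.holds_last (.nil _ _ fun _ => False.elim)))
    · have h' : (sum c d).Run sat Pa j (.inl (.inr d.q0)) j' (.inl (.inr d.qf)) :=
        h.map (Q' := (sum c d).St) (fun q => .inl (.inr q)) (fun _ _ => subset_rfl)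
          (fun _ => Set.subset_union_left) (fun _ => subset_rfl)
      exact .eps ⟨rfl, .inr rfl⟩ (fun _ => False.elim)
        (h'.trans (.eps (.inr ⟨rfl, rfl⟩) h'.holds_last (.nil _ _ fun _ => False.elim)))

lemma run_seq_iff {c d : Prog P F n} {j j' : ℕ} :
    (seq c d).Run sat Pa j (seq c d).q0 j' (seq c d).qf ↔
      ∃ jm, c.Run sat Pa j c.q0 jm c.qf ∧ d.Run sat Pa jm d.q0 j' d.qf := by
  constructor
  · intro h
    obtain ⟨jm, hc, hd⟩ := MarkedRun.exists_exit (Q' := (seq c d).St) (fun q => .inl q) c.qf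
      (.inr d.q0) (fun _ _ => subset_rfl) (fun _ => subset_rfl) (fun _ => subset_rfl) h
      (by rintro ⟨_, ⟨⟩⟩)
    exact ⟨jm, hc, hd.comap Sum.inr Sum.inr_injective (fun _ _ => subset_rfl) (fun _ => subset_rfl)
      (fun _ => subset_rfl)⟩
  · rintro ⟨jm, hc, hd⟩
    have hc' : (seq c d).Run sat Pa j (.inl c.q0) jm (.inl c.qf) :=
      hc.map (Q' := (seq c d).St) (fun q => .inl q) (fun _ _ => subset_rfl)
        (fun _ => Set.subset_union_left) (fun _ => subset_rfl)
    have hd' : (seq c d).Run sat Pa jm (.inr d.q0) j' (.inr d.qf) :=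
      hd.map Sum.inr (fun _ _ => subset_rfl) (fun _ => subset_rfl) (fun _ => subset_rfl)
    exact hc'.trans (.eps (.inr ⟨rfl, rfl⟩) hc'.holds_last hd')

/-- Stated for every start state, so that induction on the run goes through. -/
lemma run_star_elim {c : Prog P F n} {j j' : ℕ} {q : (star c).St}
    (h : (star c).Run sat Pa j q j' (star c).qf) :
    Sum.elim
      (fun qc => ∃ jm, c.Run sat Pa j qc jm c.qf ∧
        Relation.ReflTransGen (fun a b => c.Run sat Pa a c.q0 b c.qf) jm j')
      (fun _ => Relation.ReflTransGen (fun a b => c.Run sat Pa a c.q0 b c.qf) j j') q := by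
  generalize hf : (star c).qf = q'' at h
  induction h with
  | nil => subst hf; exact .refl
  | @eps j q _ _ _ he hq _ ih =>
      specialize ih hf
      rcases q with qc | i
      · rcases he with ⟨y, hy, rfl⟩ | ⟨rfl, rfl⟩
        · obtain ⟨jm, h₁, h₂⟩ := ih
          exact ⟨jm, .eps hy hq h₁, h₂⟩
        · exact ⟨_, .nil _ _ hq, ih⟩
      · rcases he with ⟨-, rfl | rfl⟩ | ⟨-, rfl⟩
        · obtain ⟨jm, h₁, h₂⟩ := ih
          exact .head h₁ h₂
        · exact ih
        · exact ih
  | @read j q _ _ _ hr hq _ ih =>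
      rcases q with qc | i
      · obtain ⟨y, hy, rfl⟩ := hr
        obtain ⟨jm, h₁, h₂⟩ := ih hf
        exact ⟨jm, .read hy hq h₁, h₂⟩
      · exact hr.elim

lemma run_star_iff {c : Prog P F n} {j j' : ℕ} :
    (star c).Run sat Pa j (star c).q0 j' (star c).qf ↔
      Relation.ReflTransGen (fun a b => c.Run sat Pa a c.q0 b c.qf) j j' := by
  refine ⟨run_star_elim, fun h => ?_⟩
  induction h using Relation.ReflTransGen.head_induction_on with
  | refl => exact .eps (.inl ⟨rfl, .inr rfl⟩) (fun _ => False.elim) (.nil _ _ fun _ => False.elim)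
  | head hc _ ih =>
      have hc' : (star c).Run sat Pa _ (.inl c.q0) _ (.inl c.qf) :=
        hc.map (Q' := (star c).St) (fun q => .inl q) (fun _ _ => subset_rfl)
          (fun _ => Set.subset_union_left) (fun _ => subset_rfl)
      exact .eps (.inl ⟨rfl, .inl rfl⟩) (fun _ => False.elim) (hc'.trans
        (.eps (.inr ⟨rfl, rfl⟩) hc'.holds_last (.eps (.inr ⟨rfl, rfl⟩) (fun _ => False.elim) ih)))

end Prog

section Semantics

variable {S P F : Type} {n : ℕ} {sat : F → (Fin n → HPath S P) → Prop} {Pa : Fin n → HPath S P}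

lemma match_star_iff {c : Prog P F n} {i k : ℕ} :
    Match sat (.star c) Pa i k ↔
      Relation.ReflTransGen (fun a b => a ≤ b ∧ Match sat c Pa a b) i k :=
  (Relation.reflTransGen_iff_exists_fin_chain (r := fun a b => a ≤ b ∧ Match sat c Pa a b)).symm

lemma Match.even {α : Prog P F n} {i k : ℕ} (h : Match sat α Pa i k) (hi : Even i) : Even k := by
  induction α generalizing i k with
  | atom t => exact h.1 ▸ hi.add even_two
  | eps => exact h ▸ hi
  | sum a b iha ihb => exact h.elim (iha · hi) (ihb · hi)
  | seq a b iha ihb =>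
      obtain ⟨j, -, -, h₁, h₂⟩ := h
      exact ihb h₂ (iha h₁ hi)
  | star a iha =>
      rw [match_star_iff] at h
      induction h with
      | refl => exact hi
      | tail _ hstep ih => exact iha hstep.2 ih
  | test ψ => exact h.1 ▸ hi

theorem match_iff_run (α : Prog P F n) (j j' : ℕ) :
    Match sat α Pa (2 * j) (2 * j') ↔ α.Run sat Pa j α.q0 j' α.qf := by
  induction α generalizing j j' with
  | atom t =>
      rw [Prog.run_atom_iff, Match, Nat.mul_div_cancel_left _ two_pos]
      exact and_congr_left' (by omega)
  | eps =>
      rw [Prog.run_eps_iff, Match]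
      omega
  | sum c d ihc ihd => rw [Prog.run_sum_iff, ← ihc, ← ihd, Match]
  | seq c d ihc ihd =>
      rw [Prog.run_seq_iff]
      constructor
      · rintro ⟨jm, -, -, hc, hd⟩
        obtain ⟨b, rfl⟩ := even_iff_exists_two_mul.1 (hc.even (even_two_mul j))
        exact ⟨b, (ihc _ _).1 hc, (ihd _ _).1 hd⟩
      · rintro ⟨jm, hc, hd⟩
        exact ⟨2 * jm, by grind [hc.le], by grind [hd.le], (ihc _ _).2 hc, (ihd _ _).2 hd⟩
  | star c ihc =>
      have hstep : (fun a b => 2 * a ≤ 2 * b ∧ Match sat c Pa (2 * a) (2 * b)) =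
          fun a b => c.Run sat Pa a c.q0 b c.qf := by
        ext a b
        rw [ihc]
        exact ⟨And.right, fun h => ⟨by grind [h.le], h⟩⟩
      rw [Prog.run_star_iff, match_star_iff, Relation.reflTransGen_comp_iff (g := (2 * ·))
        (fun a b h => by simpa using h)
        (fun a _ h => (even_iff_exists_two_mul.1 (h.2.even (even_two_mul a))).imp fun _ => Eq.symm),
        hstep]
  | test ψ =>
      rw [Prog.run_test_iff, Match, Nat.mul_div_cancel_left _ two_pos]
      exact and_congr_left' (by omega)

lemma witness_iff_runSeq {α : Prog P F n} {i k : ℕ} :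
    Witness sat α Pa i k ↔ RunSeq α.ρ α.ρε α.mark (fun ψ j => sat ψ (PAdrop Pa j))
      (fun j m => (Pa m).pr j) ((k - i) / 2) (i / 2) α.q0 α.qf :=
  Iff.rfl

end Semantics

/-- **Correctness of the construction of `M_α` (Lemma 2)**: `(Π, i, k) ∈ R(α)` holds iff
there is a witnessing state sequence of length `(k-i)/2 + 1` in `M_α` with marking sets
satisfying conditions (i)–(iv). -/
theorem match_iff_witness {S P F : Type} {n : ℕ}
    (sat : F → (Fin n → HPath S P) → Prop) (α : Prog P F n)
    (Pa : Fin n → HPath S P) (i k : ℕ) (hi : Even i) (hk : Even k) (hik : i ≤ k) :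
    Match sat α Pa i k ↔ Witness sat α Pa i k := by
  obtain ⟨a, rfl⟩ := hi
  obtain ⟨b, rfl⟩ := hk
  rw [← two_mul, ← two_mul, match_iff_run, witness_iff_runSeq, runSeq_iff_markedRun,
    show 2 * a / 2 = a by omega, show (2 * b - 2 * a) / 2 = b - a by omega,
    Nat.add_sub_cancel' (by omega)]
end

section
/- Correctness of the ∃-quantifier construction: let A₁ = MH(A_{φ₁}) = (Q₁, q_{0,1}, Sⁿ⁺¹×Σⁿ⁺¹, ρ₁, F₁) be a nondeterministic Büchi automaton T-equivalent to φ₁ (with n+1 path components), and let A_φ over alphabet Sⁿ×Σⁿ have states Q₁×S×Σ plus a fresh initial state, where a run guesses and simulates an additional path of the KTS T in its state (the S-component tracking the current state of the guessed path, the Σ-component the next atomic program, validated against the transition relations δ_σ, starting at the state Π(ε)(0) branched from). Then for every path assignment Π with |dom(Π)| = n: ν(Π) ∈ L(A_φ) if and only if there exists p ∈ Paths(T, Π(ε)(0)) such that Π[π_{n+1} → p, ε → p] ⊨_T φ₁, i.e. A_φ is T-equivalent to ∃π.φ₁. -/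
/-- A Kripke transition system with atomic propositions `AP`, atomic programs `P`,
and states `S`; every state has an outgoing transition. -/
structure KTS (AP P S : Type) where
  s0 : S
  δ : P → Set (S × S)
  L : S → Set AP
  nodead : ∀ s, ∃ s' σ, (s, s') ∈ δ σ

/-- `p` is a path of the KTS `K` (every step uses a transition of the labelling program). -/
def IsPath {AP P S : Type} (K : KTS AP P S) (p : HPath S P) : Prop :=
  ∀ j, (p.st j, p.st (j + 1)) ∈ K.δ (p.pr j)

/-- `p` is a path of `K` starting in state `s`. -/
def IsPathFrom {AP P S : Type} (K : KTS AP P S) (s : S) (p : HPath S P) : Prop :=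
  IsPath K p ∧ p.st 0 = s

/-- `p` is a suffix of a path of `K` starting in the initial state, i.e. a valid path
whose first state is reachable from `s₀`. -/
def IsPathSuffix {AP P S : Type} (K : KTS AP P S) (p : HPath S P) : Prop :=
  IsPath K p ∧ ∃ (m : ℕ) (f : ℕ → S) (g : ℕ → P), f 0 = K.s0 ∧ f m = p.st 0 ∧
    ∀ j < m, (f j, f (j + 1)) ∈ K.δ (g j)

/-- The ω-word over `Sⁿ × Σⁿ` obtained by zipping the paths of a path assignment. -/
def nu {S P : Type} {n : ℕ} (Pa : Fin n → HPath S P) : ℕ → (Fin n → S) × (Fin n → P) :=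
  fun k => (fun l => (Pa l).st k, fun l => (Pa l).pr k)

/-- The automaton `A_φ` for `∃π. φ₁`: it simulates the dealternised automaton `M` for
`φ₁` over `n+1` path components while guessing and validating an additional path of the
KTS `K` in its state (current state of the guessed path and next atomic program),
branching from the most recently quantified path (component `n-1`). -/
def existsAut {AP P S : Type} [Fintype S] [Fintype P] (K : KTS AP P S) {n : ℕ}
    (hn : 0 < n) (M : NBA ((Fin (n + 1) → S) × (Fin (n + 1) → P))) :
    NBA ((Fin n → S) × (Fin n → P)) where
  Q := Option (M.Q × S × P)
  fin := by have := M.fin; infer_instance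
  q0 := none
  δ q a :=
    match q with
    | none => {x | ∃ q' s' σ σ', x = some (q', s', σ') ∧
        q' ∈ M.δ M.q0 (Fin.snoc a.1 (a.1 ⟨n - 1, by omega⟩), Fin.snoc a.2 σ) ∧
        (a.1 ⟨n - 1, by omega⟩, s') ∈ K.δ σ}
    | some (q, s, σ) => {x | ∃ q' s' σ', x = some (q', s', σ') ∧
        q' ∈ M.δ q (Fin.snoc a.1 s, Fin.snoc a.2 σ) ∧ (s, s') ∈ K.δ σ}
  F := {x | ∃ q s σ, x = some (q, s, σ) ∧ q ∈ M.F}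

/-! A run of `existsAut` leaves `none` at once and then carries triples `(q, s, σ)`. Replacing
`none` by the virtual triple `(M.q0, s₀, σ₀)`, with `s₀` the branching state and `σ₀` the first
guessed program, gives a sequence whose `(s, σ)`-components form a path of `K` from `s₀` and whose
`q`-components form an accepting run of `M` on the word of the extended assignment; conversely,
such a path and run interleave to a run of `existsAut`. The extended assignment consists of path
suffixes because the new path starts where `π_n` does, so the `K`-equivalence of `M` and `φ₁`
applies. -/

lemma nu_snoc {S P : Type} {n : ℕ} (Pa : Fin n → HPath S P) (p : HPath S P) (k : ℕ) :
    nu (Fin.snoc Pa p) k = (Fin.snoc (nu Pa k).1 (p.st k), Fin.snoc (nu Pa k).2 (p.pr k)) := by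
  refine Prod.ext (funext fun l => ?_) (funext fun l => ?_) <;>
    induction l using Fin.lastCases <;> simp [nu]

lemma IsPathSuffix.of_isPathFrom {AP P S : Type} {K : KTS AP P S} {q p : HPath S P}
    (hq : IsPathSuffix K q) (hp : IsPathFrom K (q.st 0) p) : IsPathSuffix K p := by
  obtain ⟨-, m, f, g, hf0, hfm, hfg⟩ := hq
  exact ⟨hp.1, m, f, g, hf0, hfm.trans hp.2.symm, hfg⟩

lemma isPathSuffix_snoc {AP P S : Type} {K : KTS AP P S} {n : ℕ} {Pa : Fin n → HPath S P}
    {p : HPath S P} (hPa : ∀ l, IsPathSuffix K (Pa l)) {l₀ : Fin n}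
    (hp : IsPathFrom K ((Pa l₀).st 0) p) (l : Fin (n + 1)) :
    IsPathSuffix K ((Fin.snoc Pa p : Fin (n + 1) → HPath S P) l) := by
  induction l using Fin.lastCases with
  | last => simpa using (hPa l₀).of_isPathFrom hp
  | cast l => simpa using hPa l

lemma forall_exists_ge_add_one_iff {p : ℕ → Prop} :
    (∀ N, ∃ k ≥ N, p (k + 1)) ↔ ∀ N, ∃ k ≥ N, p k := by
  refine ⟨fun h N => ?_, fun h N => ?_⟩
  · obtain ⟨k, hk, hpk⟩ := h N
    exact ⟨k + 1, by omega, hpk⟩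
  · obtain ⟨k, hk, hpk⟩ := h (N + 1)
    exact ⟨k - 1, by omega, by rwa [Nat.sub_add_cancel (by omega)]⟩

section existsAut

variable {AP P S : Type} [Fintype S] [Fintype P] {K : KTS AP P S} {n : ℕ} {hn : 0 < n}
  {M : NBA ((Fin (n + 1) → S) × (Fin (n + 1) → P))}

lemma existsAut_some_mem_δ_some {x x' : M.Q × S × P} {a : (Fin n → S) × (Fin n → P)} :
    some x' ∈ (existsAut K hn M).δ (some x) a ↔
      x'.1 ∈ M.δ x.1 (Fin.snoc a.1 x.2.1, Fin.snoc a.2 x.2.2) ∧ (x.2.1, x'.2.1) ∈ K.δ x.2.2 := by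
  obtain ⟨q, s, σ⟩ := x
  obtain ⟨q', s', σ'⟩ := x'
  constructor
  · rintro ⟨q₁, s₁, σ₁, hx, hq, hs⟩
    cases hx
    exact ⟨hq, hs⟩
  · rintro ⟨hq, hs⟩
    exact ⟨q', s', σ', rfl, hq, hs⟩

lemma existsAut_mem_δ_none {x : Option (M.Q × S × P)} {a : (Fin n → S) × (Fin n → P)} :
    x ∈ (existsAut K hn M).δ none a ↔
      ∃ σ, x ∈ (existsAut K hn M).δ (some (M.q0, a.1 ⟨n - 1, by omega⟩, σ)) a := by
  constructor
  · rintro ⟨q', s', σ, σ', hx, hq, hs⟩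
    exact ⟨σ, q', s', σ', hx, hq, hs⟩
  · rintro ⟨σ, q', s', σ', hx, hq, hs⟩
    exact ⟨q', s', σ, σ', hx, hq, hs⟩

lemma existsAut_exists_eq_some_of_mem_δ {q x : Option (M.Q × S × P)}
    {a : (Fin n → S) × (Fin n → P)} (hx : x ∈ (existsAut K hn M).δ q a) : ∃ x', x = some x' := by
  match q, hx with
  | none, ⟨q', s', _, σ', hx, _⟩ => exact ⟨(q', s', σ'), hx⟩
  | some _, ⟨q', s', σ', hx, _⟩ => exact ⟨(q', s', σ'), hx⟩

lemma existsAut_some_mem_F {x : M.Q × S × P} : some x ∈ (existsAut K hn M).F ↔ x.1 ∈ M.F := by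
  constructor
  · rintro ⟨q, s, σ, hx, hq⟩
    cases hx
    exact hq
  · intro hq
    exact ⟨x.1, x.2.1, x.2.2, rfl, hq⟩

lemma existsAut_frequently_F_iff {r : ℕ → Option (M.Q × S × P)} {t : ℕ → M.Q × S × P}
    (hrt : ∀ k, r (k + 1) = some (t (k + 1))) :
    (∀ N, ∃ k ≥ N, r k ∈ (existsAut K hn M).F) ↔ ∀ N, ∃ k ≥ N, (t k).1 ∈ M.F := by
  rw [← forall_exists_ge_add_one_iff, ← forall_exists_ge_add_one_iff (p := fun k => (t k).1 ∈ M.F)]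
  simp only [hrt, existsAut_some_mem_F]

lemma mem_existsAut_lang_iff {w : ℕ → (Fin n → S) × (Fin n → P)} :
    w ∈ (existsAut K hn M).Lang ↔
      ∃ t : ℕ → M.Q × S × P, (t 0).1 = M.q0 ∧ (t 0).2.1 = (w 0).1 ⟨n - 1, by omega⟩ ∧
        (∀ k, some (t (k + 1)) ∈ (existsAut K hn M).δ (some (t k)) (w k)) ∧
        ∀ N, ∃ k ≥ N, (t k).1 ∈ M.F := by
  constructor
  · rintro ⟨r, hr0, hstep, hacc⟩
    choose t' ht' using fun k => existsAut_exists_eq_some_of_mem_δ (hstep k)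
    obtain ⟨σ₀, hσ₀⟩ := existsAut_mem_δ_none.mp (hr0 ▸ hstep 0)
    let t : ℕ → M.Q × S × P := fun
      | 0 => (M.q0, (w 0).1 ⟨n - 1, by omega⟩, σ₀)
      | k + 1 => t' k
    refine ⟨t, rfl, rfl, fun k => ?_, (existsAut_frequently_F_iff ht').mp hacc⟩
    cases k with
    | zero => exact ht' 0 ▸ hσ₀
    | succ k => exact ht' k ▸ ht' (k + 1) ▸ hstep (k + 1)
  · rintro ⟨t, ht0q, ht0s, hstep, hacc⟩
    let r : ℕ → Option (M.Q × S × P) := fun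
      | 0 => none
      | k + 1 => some (t (k + 1))
    refine ⟨r, rfl, fun k => ?_, (existsAut_frequently_F_iff (r := r) fun _ => rfl).mpr hacc⟩
    cases k with
    | zero =>
      refine existsAut_mem_δ_none.mpr ⟨(t 0).2.2, ?_⟩
      rw [← ht0q, ← ht0s]
      exact hstep 0
    | succ k => exact hstep (k + 1)

lemma nu_mem_existsAut_lang_iff (Pa : Fin n → HPath S P) :
    nu Pa ∈ (existsAut K hn M).Lang ↔
      ∃ p : HPath S P, IsPathFrom K ((Pa ⟨n - 1, by omega⟩).st 0) p ∧
        nu (Fin.snoc Pa p) ∈ M.Lang := by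
  simp only [mem_existsAut_lang_iff, existsAut_some_mem_δ_some]
  constructor
  · rintro ⟨t, ht0q, ht0s, hstep, hacc⟩
    refine ⟨⟨fun k => (t k).2.1, fun k => (t k).2.2⟩, ⟨fun k => (hstep k).2, ht0s⟩,
      fun k => (t k).1, ht0q, fun k => ?_, hacc⟩
    rw [nu_snoc]
    exact (hstep k).1
  · rintro ⟨p, ⟨hp, hp0⟩, q, hq0, hq, hacc⟩
    refine ⟨fun k => (q k, p.st k, p.pr k), hq0, hp0, fun k => ⟨?_, hp k⟩, hacc⟩
    rw [← nu_snoc]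
    exact hq k

end existsAut

/-- **Correctness of the `∃`-quantifier construction**: if the nondeterministic Büchi
automaton `M` (over `n+1` path components) is `K`-equivalent to the property `φ₁` of
path assignments, then for every path assignment `Π` with `n` components,
`ν(Π) ∈ L(A_φ)` iff there is a path `p` of `K` starting in `Π(ε)(0)` such that the
extended assignment `Π[π_{n+1} → p, ε → p]` satisfies `φ₁`; i.e. `A_φ` is
`K`-equivalent to `∃π. φ₁`. -/
theorem existsAut_correct {AP P S : Type} [Fintype S] [Fintype P] (K : KTS AP P S)
    {n : ℕ} (hn : 0 < n) (M : NBA ((Fin (n + 1) → S) × (Fin (n + 1) → P)))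
    (φ1 : (Fin (n + 1) → HPath S P) → Prop)
    (heq : ∀ Pa : Fin (n + 1) → HPath S P, (∀ l, IsPathSuffix K (Pa l)) →
      (nu Pa ∈ M.Lang ↔ φ1 Pa)) :
    ∀ Pa : Fin n → HPath S P, (∀ l, IsPathSuffix K (Pa l)) →
      (nu Pa ∈ (existsAut K hn M).Lang ↔
        ∃ p : HPath S P, IsPathFrom K ((Pa ⟨n - 1, by omega⟩).st 0) p ∧
          φ1 (Fin.snoc Pa p)) := by
  intro Pa hPa
  rw [nu_mem_existsAut_lang_iff]
  exact exists_congr fun p => and_congr_right fun hp => heq _ (isPathSuffix_snoc hPa hp)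
end
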